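/- arXiv:1603.01030 — 7 statements merged into one kernel-verified Lean document; each statement's English description precedes it below -/
import Mathlib

section
/- Let z : ℝ → ℝ be differentiable, positive and nonincreasing on [T, ∞), P : ℝ → ℝ continuous nonnegative with z'(t) + P(t)·z(t−1) ≤ 0 for all t > T. If limsup_{t→∞} ∫_{t−1}^{t} P(s) ds > 1, then there is no such z; i.e., the hypotheses imply limsup_{t→∞} ∫_{t−1}^{t} P(s) ds ≤ 1. -/
open Filter intervalIntegral

/-- If `z` is differentiable, positive and nonincreasing on `[T, ∞)`, `P` is continuous
nonnegative, and `z'(t) + P(t) z(t-1) ≤ 0` for all `t > T`, then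
`limsup_{t→∞} ∫_{t-1}^{t} P(s) ds ≤ 1`. -/
theorem limsup_integral_le_one
    (z P : ℝ → ℝ) (T : ℝ)
    (hdiff : ∀ t, T ≤ t → DifferentiableAt ℝ z t)
    (hmono : AntitoneOn z (Set.Ici T))
    (hpos : ∀ t, T ≤ t → 0 < z t)
    (hPc : Continuous P) (hPnn : ∀ t, 0 ≤ P t)
    (hineq : ∀ t, T < t → deriv z t + P t * z (t - 1) ≤ 0) :
    Filter.limsup (fun t => ∫ s in (t - 1)..t, P s) Filter.atTop ≤ 1 := by
  -- A continuous extension of z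
  set w : ℝ → ℝ := fun s => z (max s T) with hw
  have hwc : Continuous w := by
    rw [continuous_iff_continuousAt]
    intro s
    have h1 : ContinuousAt (fun s : ℝ => max s T) s :=
      (continuous_id.max continuous_const).continuousAt
    exact ContinuousAt.comp (g := z) (f := fun s : ℝ => max s T) (x := s)
      ((hdiff (max s T) (le_max_right _ _)).continuousAt) h1
  have hweq : ∀ s, T ≤ s → w s = z s := fun s hs => by simp [hw, max_eq_left hs]
  set f : ℝ → ℝ := fun s => P s * w (s - 1) with hf
  have hfc : Continuous f := hPc.mul (hwc.comp (continuous_id.sub continuous_const))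
  set c : ℝ := T + 1 with hc
  set g : ℝ → ℝ := fun t => z t + ∫ s in c..t, f s with hg
  have hgd : ∀ t, T ≤ t → HasDerivAt g (deriv z t + f t) t := by
    intro t ht
    exact ((hdiff t ht).hasDerivAt).add
      (intervalIntegral.integral_hasDerivAt_right (hfc.intervalIntegrable _ _)
        (hfc.stronglyMeasurableAtFilter _ _) hfc.continuousAt)
  have hganti : AntitoneOn g (Set.Ici c) := by
    apply antitoneOn_of_deriv_nonpos (convex_Ici c)
    · intro t ht
      exact ((hgd t (by simp only [Set.mem_Ici] at ht; linarith)).continuousAt).continuousWithinAt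
    · intro t ht
      rw [interior_Ici] at ht
      exact ((hgd t (by simp only [Set.mem_Ioi] at ht; linarith)).differentiableAt).differentiableWithinAt
    · intro t ht
      rw [interior_Ici] at ht
      simp only [Set.mem_Ioi] at ht
      rw [(hgd t (by linarith)).deriv]
      have : w (t - 1) = z (t - 1) := hweq _ (by linarith)
      simp only [hf, this]
      exact hineq t (by linarith)
  have key : ∀ t, T + 2 ≤ t → (∫ s in (t - 1)..t, P s) ≤ 1 := by
    intro t ht
    have h1 : g t ≤ g (t - 1) := hganti (by simp [hc]; linarith) (by simp [hc]; linarith) (by linarith)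
    have hadj : (∫ s in c..(t-1), f s) + ∫ s in (t-1)..t, f s = ∫ s in c..t, f s :=
      intervalIntegral.integral_add_adjacent_intervals (hfc.intervalIntegrable _ _)
        (hfc.intervalIntegrable _ _)
    have h2 : (∫ s in (t-1)..t, f s) ≤ z (t - 1) - z t := by
      simp only [hg] at h1
      linarith [h1, hadj]
    have h3 : z (t - 1) * ∫ s in (t-1)..t, P s ≤ ∫ s in (t-1)..t, f s := by
      rw [← intervalIntegral.integral_const_mul]
      apply intervalIntegral.integral_mono_on (by linarith)
        ((continuous_const.mul hPc).intervalIntegrable _ _) (hfc.intervalIntegrable _ _)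
      intro s hs
      simp only [Set.mem_Icc] at hs
      have hsT : T ≤ s - 1 := by linarith [hs.1]
      have hws : w (s - 1) = z (s - 1) := hweq _ hsT
      have hzz : z (t - 1) ≤ z (s - 1) :=
        hmono (Set.mem_Ici.mpr hsT) (Set.mem_Ici.mpr (by linarith)) (by linarith [hs.2])
      simp only [hf, hws]
      calc z (t - 1) * P s ≤ z (s - 1) * P s := mul_le_mul_of_nonneg_right hzz (hPnn s)
        _ = P s * z (s - 1) := mul_comm _ _
    have hz1 : 0 < z (t - 1) := hpos _ (by linarith)
    have hz2 : 0 < z t := hpos _ (by linarith)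
    have h4 : z (t - 1) * ∫ s in (t-1)..t, P s ≤ z (t - 1) - z t := le_trans h3 h2
    nlinarith [h4]
  have hev : ∀ᶠ t in atTop, (fun t => ∫ s in (t - 1)..t, P s) t ≤ 1 :=
    Filter.eventually_atTop.mpr ⟨T + 2, key⟩
  have hbd : Filter.IsCoboundedUnder (· ≤ ·) Filter.atTop (fun t => ∫ s in (t - 1)..t, P s) := by
    apply Filter.IsBoundedUnder.isCoboundedUnder_flip
    refine ⟨0, ?_⟩
    rw [Filter.eventually_map]
    exact Filter.Eventually.of_forall fun t =>
      intervalIntegral.integral_nonneg (by linarith) (fun s _ => hPnn s)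
  exact Filter.limsup_le_of_le hbd hev
end

section
/- Let z : ℝ → ℝ be differentiable, positive and nonincreasing on [T, ∞), P : ℝ → ℝ continuous nonnegative with z'(t) + P(t)·z(t−1) ≤ 0 for all t > T. If liminf_{t→∞} z(t−1)/z(t) = +∞, then a contradiction follows; hence liminf_{t→∞} z(t−1)/z(t) is finite. -/
open Filter intervalIntegral

open MeasureTheory

lemma key_ineq (z P : ℝ → ℝ) (T : ℝ)
    (hdiff : ∀ t, T ≤ t → DifferentiableAt ℝ z t)
    (hmono : AntitoneOn z (Set.Ici T))
    (hPc : Continuous P) (hPnn : ∀ t, 0 ≤ P t)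
    (hineq : ∀ t, T < t → deriv z t + P t * z (t - 1) ≤ 0)
    (a b : ℝ) (ha : T + 1 ≤ a) (hab : a ≤ b) :
    z (b - 1) * ∫ s in a..b, P s ≤ z a - z b := by
  set g : ℝ → ℝ := fun s => P s * z (s - 1) with hg
  have hgc : ∀ x : ℝ, T + 1 ≤ x → ContinuousAt g x := by
    intro x hx
    have hz1 : ContinuousAt (fun s : ℝ => z (s - 1)) x :=
      ContinuousAt.comp (g := z) (f := fun s : ℝ => s - 1)
        (hdiff (x - 1) (by linarith)).continuousAt (continuousAt_id.sub continuousAt_const)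
    exact hPc.continuousAt.mul hz1
  have hgcOn : ContinuousOn g (Set.Icc a b) := fun x hx =>
    (hgc x (le_trans ha hx.1)).continuousWithinAt
  have hgint : IntervalIntegrable g volume a b := by
    apply ContinuousOn.intervalIntegrable
    rwa [Set.uIcc_of_le hab]
  set G : ℝ → ℝ := fun x => ∫ s in a..x, g s with hG
  have hGc : ContinuousOn G (Set.Icc a b) := by
    have h := intervalIntegral.continuousOn_primitive_interval
      (μ := volume) (f := g) (a := a) (b := b) ?_
    · rwa [Set.uIcc_of_le hab] at h
    · rw [Set.uIcc_of_le hab]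
      exact hgcOn.integrableOn_compact isCompact_Icc
  have hGd : ∀ x ∈ Set.Ioo a b, HasDerivAt G (g x) x := by
    intro x hx
    apply intervalIntegral.integral_hasDerivAt_right
    · apply hgint.mono_set
      rw [Set.uIcc_of_le hab, Set.uIcc_of_le hx.1.le]
      exact Set.Icc_subset_Icc le_rfl hx.2.le
    · exact ContinuousAt.stronglyMeasurableAtFilter (s := Set.Ioi (T + 1)) isOpen_Ioi
        (fun y hy => hgc y hy.le) x (by simp only [Set.mem_Ioi]; linarith [hx.1])
    · exact hgc x (by linarith [hx.1])
  have hzc : ContinuousOn z (Set.Icc a b) := fun x hx =>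
    ((hdiff x (le_trans (by linarith) hx.1)).continuousAt).continuousWithinAt
  have hanti : AntitoneOn (fun x => z x + G x) (Set.Icc a b) := by
    apply antitoneOn_of_deriv_nonpos (convex_Icc a b) (hzc.add hGc)
    · intro x hx
      rw [interior_Icc] at hx
      exact (((hdiff x (by linarith [hx.1])).hasDerivAt).add
        (hGd x hx)).differentiableAt.differentiableWithinAt
    · intro x hx
      rw [interior_Icc] at hx
      rw [(((hdiff x (by linarith [hx.1])).hasDerivAt).add (hGd x hx)).deriv]
      exact hineq x (by linarith [hx.1])
  have h1 : z b + G b ≤ z a + G a :=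
    hanti (Set.left_mem_Icc.2 hab) (Set.right_mem_Icc.2 hab) hab
  have hGa : G a = 0 := intervalIntegral.integral_same
  have h2 : z (b - 1) * ∫ s in a..b, P s ≤ G b := by
    rw [hG, ← intervalIntegral.integral_const_mul]
    apply intervalIntegral.integral_mono_on hab
      ((hPc.intervalIntegrable a b).const_mul _) hgint
    intro x hx
    have hz : z (b - 1) ≤ z (x - 1) :=
      hmono (by simp only [Set.mem_Ici]; linarith [hx.1])
        (by simp only [Set.mem_Ici]; linarith) (by linarith [hx.2])
    calc z (b - 1) * P x ≤ z (x - 1) * P x := mul_le_mul_of_nonneg_right hz (hPnn x)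
      _ = g x := mul_comm _ _
  linarith

/-- Under the standing assumption `liminf_{t→∞} ∫_{t-1}^t P > 1/e`, an eventually positive
nonincreasing differentiable solution of `z'(t) + P(t) z(t-1) ≤ 0` cannot satisfy
`liminf_{t→∞} z(t-1)/z(t) = +∞`; i.e. the liminf (computed in `EReal`) is finite. -/
theorem liminf_ratio_finite
    (z P : ℝ → ℝ) (T : ℝ)
    (hdiff : ∀ t, T ≤ t → DifferentiableAt ℝ z t)
    (hmono : AntitoneOn z (Set.Ici T))
    (hpos : ∀ t, T ≤ t → 0 < z t)
    (hPc : Continuous P) (hPnn : ∀ t, 0 ≤ P t)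
    (hineq : ∀ t, T < t → deriv z t + P t * z (t - 1) ≤ 0)
    (hstanding : 1 / Real.exp 1 <
      Filter.liminf (fun t => ∫ s in (t - 1)..t, P s) Filter.atTop) :
    Filter.liminf (fun t => ((z (t - 1) / z t : ℝ) : EReal)) Filter.atTop ≠ ⊤ := by
  set c : ℝ := 1 / Real.exp 1 with hcdef
  have hc : 0 < c := by positivity
  set K : ℝ := (2 / c) ^ 2 with hKdef
  have hbdd : Filter.IsBoundedUnder (· ≥ ·) Filter.atTop
      (fun t => ∫ s in (t - 1)..t, P s) :=
    Filter.isBoundedUnder_of ⟨0, fun t =>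
      (intervalIntegral.integral_nonneg (by linarith) (fun s _ => hPnn s))⟩
  have hev : ∀ᶠ t in Filter.atTop, c < ∫ s in (t - 1)..t, P s :=
    Filter.eventually_lt_of_lt_liminf hstanding hbdd
  obtain ⟨T₁, hT₁⟩ := Filter.eventually_atTop.1 hev
  apply ne_top_of_le_ne_top (EReal.coe_ne_top K)
  apply Filter.liminf_le_of_frequently_le'
  rw [Filter.frequently_atTop]
  intro t₀
  set t : ℝ := max t₀ (max (T + 2) T₁) + 1 with htdef
  have ht2 : T + 2 ≤ t := le_trans (le_max_left _ _) (le_trans (le_max_right t₀ _) (by linarith [le_refl t]))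
  have ht1 : T₁ ≤ t := le_trans (le_max_right _ _) (le_trans (le_max_right t₀ _) (by linarith))
  have ht0 : t₀ ≤ t - 1 := by
    have := le_max_left t₀ (max (T + 2) T₁); simp only [htdef]; linarith
  have htP : c < ∫ s in (t - 1)..t, P s := hT₁ t ht1
  -- intermediate value
  have hFc : ContinuousOn (fun x => ∫ s in (t - 1)..x, P s) (Set.Icc (t - 1) t) := by
    have h := intervalIntegral.continuousOn_primitive_interval (μ := volume) (f := P)
      (a := t - 1) (b := t) ((hPc.continuousOn).integrableOn_compact isCompact_uIcc)
    rwa [Set.uIcc_of_le (by linarith : t - 1 ≤ t)] at h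
  have hivt := intermediate_value_Icc (by linarith : t - 1 ≤ t) hFc
  have hmem : c / 2 ∈ Set.Icc ((fun x => ∫ s in (t - 1)..x, P s) (t - 1))
      ((fun x => ∫ s in (t - 1)..x, P s) t) := by
    simp only [intervalIntegral.integral_same]
    constructor <;> [positivity; linarith]
  obtain ⟨ξ, hξmem, hξ⟩ := hivt hmem
  simp only at hξ
  have hξ1 : t - 1 ≤ ξ := hξmem.1
  have hξ2 : ξ ≤ t := hξmem.2
  refine ⟨ξ, by linarith, ?_⟩
  -- the two key inequalities
  have k1 : z (ξ - 1) * ∫ s in (t - 1)..ξ, P s ≤ z (t - 1) - z ξ :=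
    key_ineq z P T hdiff hmono hPc hPnn hineq (t - 1) ξ (by linarith) hξ1
  have k2 : z (t - 1) * ∫ s in ξ..t, P s ≤ z ξ - z t :=
    key_ineq z P T hdiff hmono hPc hPnn hineq ξ t (by linarith) hξ2
  have hsplit : (∫ s in (t - 1)..ξ, P s) + ∫ s in ξ..t, P s = ∫ s in (t - 1)..t, P s :=
    intervalIntegral.integral_add_adjacent_intervals (hPc.intervalIntegrable _ _)
      (hPc.intervalIntegrable _ _)
  have hI2 : c / 2 ≤ ∫ s in ξ..t, P s := by linarith
  have pz1 : 0 < z (ξ - 1) := hpos _ (by linarith)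
  have pz2 : 0 < z ξ := hpos _ (by linarith)
  have pz3 : 0 < z (t - 1) := hpos _ (by linarith)
  have pz4 : 0 < z t := hpos _ (by linarith)
  have hA : z (t - 1) * (c / 2) ≤ z ξ := by
    have := mul_le_mul_of_nonneg_left hI2 pz3.le
    linarith
  have hB : z (ξ - 1) * (c / 2) ≤ z (t - 1) := by rw [← hξ]; linarith
  have hC : z (ξ - 1) * (c / 2) * (c / 2) ≤ z ξ :=
    le_trans (mul_le_mul_of_nonneg_right hB (by positivity)) hA
  have h4 : (2 / c) ^ 2 * c ^ 2 = 4 := by field_simp; norm_num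
  have hfin : z (ξ - 1) / z ξ ≤ K := by
    rw [div_le_iff₀ pz2, hKdef]
    nlinarith [hC, h4, mul_pos hc hc, pz2]
  exact_mod_cast EReal.coe_le_coe_iff.2 hfin
end

section
/- Let z : ℝ → ℝ be differentiable, positive and nonincreasing on [T, ∞), P continuous nonnegative, and z'(t) + P(t)·z(t−1) ≤ 0 for t > T. Then for t > T + 1: ln(z(t−1)/z(t)) ≥ ∫_{t−1}^{t} P(s)·(z(s−1)/z(s)) ds. -/
open Filter intervalIntegral

/-- Logarithmic integral estimate: dividing `z'(t) + P(t) z(t-1) ≤ 0` by `z(t) > 0` and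
integrating from `t-1` to `t` yields
`ln(z(t-1)/z(t)) ≥ ∫_{t-1}^{t} P(s) · z(s-1)/z(s) ds` for `t > T + 1`. -/
theorem log_ratio_ge_integral
    (z P : ℝ → ℝ) (T : ℝ)
    (hdiff : ∀ t, T ≤ t → DifferentiableAt ℝ z t)
    (hmono : AntitoneOn z (Set.Ici T))
    (hpos : ∀ t, T ≤ t → 0 < z t)
    (hPc : Continuous P) (hPnn : ∀ t, 0 ≤ P t)
    (hineq : ∀ t, T < t → deriv z t + P t * z (t - 1) ≤ 0) :
    ∀ t, T + 1 < t →
      Real.log (z (t - 1) / z t) ≥ ∫ s in (t - 1)..t, P s * (z (s - 1) / z s) := by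
  intro t ht
  have hT1 : T < t - 1 := by linarith
  have hzt1 : 0 < z (t - 1) := hpos _ hT1.le
  have hzt : 0 < z t := hpos _ (by linarith)
  have hlogpos : 0 ≤ Real.log (z (t - 1) / z t) := by
    apply Real.log_nonneg
    rw [le_div_iff₀ hzt, one_mul]
    exact hmono (by simp [Set.mem_Ici]; linarith) (by simp [Set.mem_Ici]; linarith) (by linarith)
  by_cases hint : IntervalIntegrable (fun s => P s * (z (s - 1) / z s)) MeasureTheory.volume (t - 1) t
  · have hIcc : MeasureTheory.IntegrableOn (fun s => P s * (z (s - 1) / z s)) (Set.Icc (t - 1) t) :=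
      (intervalIntegrable_iff_integrableOn_Icc_of_le (by linarith)).mp hint
    have key := integral_le_sub_of_hasDeriv_right_of_le (g := fun s => -Real.log (z s))
        (g' := fun s => -(deriv z s / z s)) (φ := fun s => P s * (z (s - 1) / z s))
        (a := t - 1) (b := t) (by linarith)
        (fun x hx => by
          have hx' : T ≤ x := le_trans hT1.le hx.1
          exact (ContinuousAt.continuousWithinAt
            (((hdiff x hx').continuousAt.log (hpos x hx').ne').neg))
        )
        (fun x hx => by
          have hx' : T ≤ x := le_trans hT1.le hx.1.le
          exact ((((hdiff x hx').hasDerivAt.log (hpos x hx').ne')).neg).hasDerivWithinAt)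
        hIcc
        (fun x hx => by
          have hxT : T < x := lt_trans hT1 hx.1
          have h1 := hineq x hxT
          have hzx : 0 < z x := hpos x hxT.le
          have heq : P x * (z (x - 1) / z x) = (P x * z (x - 1)) / z x := by ring
          rw [heq, ← neg_div, div_le_div_iff_of_pos_right hzx]
          linarith
        )
    calc (∫ s in (t-1)..t, P s * (z (s - 1) / z s))
        ≤ (fun s => -Real.log (z s)) t - (fun s => -Real.log (z s)) (t - 1) := key
      _ = Real.log (z (t - 1) / z t) := by
          simp only
          rw [Real.log_div hzt1.ne' hzt.ne']
          ring
  · rw [intervalIntegral.integral_undef hint]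
    exact hlogpos
end

section
/- Suppose z : ℝ → ℝ is differentiable, positive and nonincreasing on [T, ∞), P continuous nonnegative, and z'(t) + P(t)·z(t−1) ≤ 0 for all t > T. Then liminf_{t→∞} ∫_{t−1}^{t} P(s) ds ≤ 1/e. Consequently, if liminf_{t→∞} ∫_{t−1}^{t} P(s) ds > 1/e, the inequality z' + P(t) z(t−1) ≤ 0 has no eventually positive nonincreasing solution. -/
/-!
Suppose `∫_{t-1}^t P ≥ L > 1/e` for all large `t`. Two estimates on the ratio
`z (t-1) / z t` of a positive nonincreasing solution then clash.

* It is small infinitely often: splitting `[t-1, t]` at a point `r` where both halves carry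
  `P`-mass at least `L/2`, integrating the inequality over each half gives
  `z (r-1) (L/2)² ≤ z r`.
* It tends to infinity: dividing the inequality by `z` and integrating over `[t-1, t]` gives
  `log (z (t-1) / z t) ≥ ∫_{t-1}^t P(s) z(s-1)/z(s) ds`, so a lower bound `c` on the ratio
  improves to `exp (c L) ≥ (e L) c`, and iterating gives geometric growth since `e L > 1`.
-/

open Filter intervalIntegral Set

lemma integral_le_sub_of_deriv_add_nonpos {F Q : ℝ → ℝ} {a b : ℝ} (hab : a ≤ b)
    (hF : ∀ t ∈ Icc a b, DifferentiableAt ℝ F t) (hQ : ContinuousOn Q (Icc a b))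
    (h : ∀ t ∈ Ioo a b, deriv F t + Q t ≤ 0) :
    ∫ s in a..b, Q s ≤ F a - F b := by
  have := sub_le_integral_of_hasDeriv_right_of_le hab
    (fun t ht => (hF t ht).continuousAt.continuousWithinAt)
    (fun t ht => (hF t (Ioo_subset_Icc_self ht)).hasDerivAt.hasDerivWithinAt)
    (φ := fun t => -Q t) hQ.neg.integrableOn_Icc (fun t ht => by linarith [h t ht])
  rw [integral_neg] at this
  linarith

lemma mul_integral_le_integral_mul {f g : ℝ → ℝ} {a b c : ℝ} (hab : a ≤ b)
    (hf : IntervalIntegrable f MeasureTheory.volume a b)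
    (hfg : IntervalIntegrable (fun s => f s * g s) MeasureTheory.volume a b)
    (hf0 : ∀ s ∈ Icc a b, 0 ≤ f s) (hg : ∀ s ∈ Icc a b, c ≤ g s) :
    c * ∫ s in a..b, f s ≤ ∫ s in a..b, f s * g s := by
  rw [← integral_const_mul]
  refine integral_mono_on hab (hf.const_mul c) hfg fun s hs => ?_
  rw [mul_comm]
  exact mul_le_mul_of_nonneg_left (hg s hs) (hf0 s hs)

lemma exists_integral_eq_of_le {P : ℝ → ℝ} (hP : Continuous P) {a b m : ℝ} (hab : a ≤ b)
    (hm0 : 0 ≤ m) (hm : m ≤ ∫ s in a..b, P s) :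
    ∃ r ∈ Icc a b, ∫ s in r..b, P s = m := by
  have hcont : ContinuousOn (fun r => ∫ s in r..b, P s) (Icc a b) := by
    simpa only [uIcc_of_le hab] using
      continuousOn_primitive_interval_left
        (hP.integrableOn_uIcc (μ := MeasureTheory.volume) (a := a) (b := b))
  exact intermediate_value_Icc' hab hcont ⟨by simpa using hm0, hm⟩

lemma tendsto_atTop_of_eventually_mul_le {α : Type*} {l : Filter α} {u : α → ℝ} {q : ℝ}
    (hq : 1 < q) (h1 : ∀ᶠ x in l, 1 ≤ u x)
    (hstep : ∀ c, 0 ≤ c → (∀ᶠ x in l, c ≤ u x) → ∀ᶠ x in l, q * c ≤ u x) :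
    Tendsto u l atTop := by
  have hpow : ∀ n : ℕ, ∀ᶠ x in l, q ^ n ≤ u x := by
    intro n
    induction n with
    | zero => simpa using h1
    | succ n ih => simpa only [pow_succ'] using hstep _ (by positivity) ih
  refine tendsto_atTop.2 fun M => ?_
  obtain ⟨n, hn⟩ := pow_unbounded_of_one_lt M hq
  exact (hpow n).mono fun x hx => hn.le.trans hx

section DelayInequality

variable {z P : ℝ → ℝ} {T : ℝ}

lemma continuousOn_delay (hdiff : ∀ t, T ≤ t → DifferentiableAt ℝ z t) :
    ContinuousOn (fun s => z (s - 1)) (Ici (T + 1)) :=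
  fun s hs => (ContinuousAt.comp (g := z) (x := s)
    (hdiff (s - 1) (by simp only [mem_Ici] at hs; linarith)).continuousAt
    (continuous_sub_right 1).continuousAt).continuousWithinAt

lemma mul_integral_le_sub (hdiff : ∀ t, T ≤ t → DifferentiableAt ℝ z t)
    (hmono : AntitoneOn z (Ici T)) (hPc : Continuous P) (hPnn : ∀ t, 0 ≤ P t)
    (hineq : ∀ t, T < t → deriv z t + P t * z (t - 1) ≤ 0) {a b : ℝ} (ha : T + 1 ≤ a)
    (hab : a ≤ b) : z (b - 1) * ∫ s in a..b, P s ≤ z a - z b := by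
  have hQ : ContinuousOn (fun s => P s * z (s - 1)) (Icc a b) :=
    hPc.continuousOn.mul ((continuousOn_delay hdiff).mono fun s hs => ha.trans hs.1)
  calc z (b - 1) * ∫ s in a..b, P s
      ≤ ∫ s in a..b, P s * z (s - 1) :=
        mul_integral_le_integral_mul hab (hPc.intervalIntegrable a b)
          (hQ.intervalIntegrable_of_Icc hab) (fun s _ => hPnn s)
          fun s hs => hmono (by simp only [mem_Ici]; linarith [hs.1])
            (by simp only [mem_Ici]; linarith) (by linarith [hs.2])
    _ ≤ z a - z b :=
        integral_le_sub_of_deriv_add_nonpos hab (fun t ht => hdiff t (by linarith [ht.1])) hQ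
          fun t ht => hineq t (by linarith [ht.1])

lemma continuousOn_mul_delay_ratio (hdiff : ∀ t, T ≤ t → DifferentiableAt ℝ z t)
    (hpos : ∀ t, T ≤ t → 0 < z t) (hPc : Continuous P) :
    ContinuousOn (fun s => P s * (z (s - 1) / z s)) (Ici (T + 1)) :=
  hPc.continuousOn.mul ((continuousOn_delay hdiff).div
    (fun s hs => (hdiff s (by simp only [mem_Ici] at hs; linarith)).continuousAt.continuousWithinAt)
    fun s hs => (hpos s (by simp only [mem_Ici] at hs; linarith)).ne')

lemma integral_mul_delay_ratio_le_log_sub (hdiff : ∀ t, T ≤ t → DifferentiableAt ℝ z t)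
    (hpos : ∀ t, T ≤ t → 0 < z t) (hPc : Continuous P)
    (hineq : ∀ t, T < t → deriv z t + P t * z (t - 1) ≤ 0) {a b : ℝ} (ha : T + 1 ≤ a)
    (hab : a ≤ b) :
    ∫ s in a..b, P s * (z (s - 1) / z s) ≤ Real.log (z a) - Real.log (z b) := by
  refine integral_le_sub_of_deriv_add_nonpos hab
    (fun t ht => (hdiff t (by linarith [ht.1])).log (hpos t (by linarith [ht.1])).ne') ?_ ?_
  · exact (continuousOn_mul_delay_ratio hdiff hpos hPc).mono fun s hs => ha.trans hs.1
  · intro t ht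
    have hT : T < t := by linarith [ht.1]
    have hzt := hpos t hT.le
    rw [((hdiff t hT.le).hasDerivAt.log hzt.ne').deriv, ← mul_div_assoc, ← add_div]
    exact div_nonpos_of_nonpos_of_nonneg (hineq t hT) hzt.le

lemma exists_delay_ratio_le (hdiff : ∀ t, T ≤ t → DifferentiableAt ℝ z t)
    (hmono : AntitoneOn z (Ici T)) (hpos : ∀ t, T ≤ t → 0 < z t) (hPc : Continuous P)
    (hPnn : ∀ t, 0 ≤ P t) (hineq : ∀ t, T < t → deriv z t + P t * z (t - 1) ≤ 0)
    {L t : ℝ} (hL : 0 < L) (ht : T + 2 ≤ t) (hLt : L ≤ ∫ s in (t - 1)..t, P s) :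
    ∃ r ∈ Icc (t - 1) t, z (r - 1) / z r ≤ (2 / L) ^ 2 := by
  obtain ⟨r, hr, hrt⟩ :=
    exists_integral_eq_of_le hPc (by linarith : t - 1 ≤ t) (by positivity : 0 ≤ L / 2)
      (by linarith)
  have hsplit : ∫ s in (t - 1)..r, P s = (∫ s in (t - 1)..t, P s) - L / 2 := by
    linarith [integral_add_adjacent_intervals
      (hPc.intervalIntegrable (μ := MeasureTheory.volume) (t - 1) r) (hPc.intervalIntegrable r t)]
  have hright := mul_integral_le_sub hdiff hmono hPc hPnn hineq (by linarith [hr.1]) hr.2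
  have hleft :=
    mul_integral_le_sub hdiff hmono hPc hPnn hineq (by linarith : T + 1 ≤ t - 1) hr.1
  rw [hrt] at hright
  rw [hsplit] at hleft
  have hzt := hpos t (by linarith)
  have hzr := hpos r (by linarith [hr.1])
  have hzr1 := hpos (r - 1) (by linarith [hr.1])
  refine ⟨r, hr, (div_le_iff₀ hzr).2 ?_⟩
  have hdelay : z (r - 1) * (L / 2) ≤ z (t - 1) := by nlinarith
  calc z (r - 1) = (2 / L) ^ 2 * (z (r - 1) * (L / 2) * (L / 2)) := by field_simp
    _ ≤ (2 / L) ^ 2 * z r := by gcongr; nlinarith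

lemma frequently_delay_ratio_le (hdiff : ∀ t, T ≤ t → DifferentiableAt ℝ z t)
    (hmono : AntitoneOn z (Ici T)) (hpos : ∀ t, T ≤ t → 0 < z t) (hPc : Continuous P)
    (hPnn : ∀ t, 0 ≤ P t) (hineq : ∀ t, T < t → deriv z t + P t * z (t - 1) ≤ 0)
    {L : ℝ} (hL : 0 < L) (hLt : ∀ᶠ t in atTop, L ≤ ∫ s in (t - 1)..t, P s) :
    ∃ᶠ t in atTop, z (t - 1) / z t ≤ (2 / L) ^ 2 := by
  refine frequently_atTop.2 fun t₀ => ?_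
  obtain ⟨t, hLt_t, ht⟩ := (hLt.and (eventually_ge_atTop (max (t₀ + 1) (T + 2)))).exists
  obtain ⟨r, hr, hratio⟩ := exists_delay_ratio_le hdiff hmono hpos hPc hPnn hineq hL
    (le_of_max_le_right ht) hLt_t
  exact ⟨r, by linarith [le_of_max_le_left ht, hr.1], hratio⟩

lemma eventually_one_le_delay_ratio (hmono : AntitoneOn z (Ici T))
    (hpos : ∀ t, T ≤ t → 0 < z t) : ∀ᶠ t in atTop, 1 ≤ z (t - 1) / z t := by
  filter_upwards [eventually_ge_atTop (T + 1)] with t ht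
  rw [one_le_div (hpos t (by linarith))]
  exact hmono (by simp only [mem_Ici]; linarith) (by simp only [mem_Ici]; linarith) (by linarith)

lemma eventually_mul_le_delay_ratio (hdiff : ∀ t, T ≤ t → DifferentiableAt ℝ z t)
    (hpos : ∀ t, T ≤ t → 0 < z t) (hPc : Continuous P) (hPnn : ∀ t, 0 ≤ P t)
    (hineq : ∀ t, T < t → deriv z t + P t * z (t - 1) ≤ 0) {L c : ℝ} (hc : 0 ≤ c)
    (hL : ∀ᶠ t in atTop, L ≤ ∫ s in (t - 1)..t, P s)
    (hcz : ∀ᶠ t in atTop, c ≤ z (t - 1) / z t) :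
    ∀ᶠ t in atTop, Real.exp 1 * L * c ≤ z (t - 1) / z t := by
  obtain ⟨T₁, hT₁⟩ := eventually_atTop.1 hcz
  filter_upwards [hL, eventually_ge_atTop (T₁ + 1), eventually_ge_atTop (T + 2)]
    with t hLt ht₁ ht
  have hQ : ContinuousOn (fun s => P s * (z (s - 1) / z s)) (Icc (t - 1) t) :=
    (continuousOn_mul_delay_ratio hdiff hpos hPc).mono fun s hs => by
      simp only [mem_Ici]; linarith [hs.1]
  have hexponent : c * L ≤ Real.log (z (t - 1)) - Real.log (z t) :=
    calc c * L ≤ c * ∫ s in (t - 1)..t, P s := mul_le_mul_of_nonneg_left hLt hc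
      _ ≤ ∫ s in (t - 1)..t, P s * (z (s - 1) / z s) :=
          mul_integral_le_integral_mul (by linarith) (hPc.intervalIntegrable _ _)
            (hQ.intervalIntegrable_of_Icc (by linarith)) (fun s _ => hPnn s)
            fun s hs => hT₁ s (by linarith [hs.1])
      _ ≤ _ := integral_mul_delay_ratio_le_log_sub hdiff hpos hPc hineq (by linarith)
          (by linarith)
  calc Real.exp 1 * L * c = Real.exp 1 * (c * L) := by ring
    _ ≤ Real.exp (c * L) := Real.exp_one_mul_le_exp
    _ ≤ Real.exp (Real.log (z (t - 1)) - Real.log (z t)) := Real.exp_le_exp.2 hexponent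
    _ = z (t - 1) / z t := by
        rw [Real.exp_sub, Real.exp_log (hpos _ (by linarith)), Real.exp_log (hpos _ (by linarith))]

end DelayInequality

/-- Core of the `1/e` (liminf-type) oscillation criterion: an eventually positive,
nonincreasing, differentiable solution of `z'(t) + P(t) z(t-1) ≤ 0` forces
`liminf_{t→∞} ∫_{t-1}^{t} P(s) ds ≤ 1/e`. -/
theorem liminf_integral_le_inv_e
    (z P : ℝ → ℝ) (T : ℝ)
    (hdiff : ∀ t, T ≤ t → DifferentiableAt ℝ z t)
    (hmono : AntitoneOn z (Set.Ici T))
    (hpos : ∀ t, T ≤ t → 0 < z t)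
    (hPc : Continuous P) (hPnn : ∀ t, 0 ≤ P t)
    (hineq : ∀ t, T < t → deriv z t + P t * z (t - 1) ≤ 0) :
    Filter.liminf (fun t => ∫ s in (t - 1)..t, P s) Filter.atTop ≤ 1 / Real.exp 1 := by
  by_contra! hcon
  obtain ⟨L, hLe, hL⟩ := exists_between hcon
  have hLt : ∀ᶠ t in atTop, L ≤ ∫ s in (t - 1)..t, P s :=
    (eventually_lt_of_lt_liminf hL (isBoundedUnder_of_eventually_ge (a := 0)
      (Eventually.of_forall fun t => integral_nonneg (by linarith) fun s _ => hPnn s))).mono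
      fun _ h => h.le
  have hLpos : 0 < L := lt_trans (by positivity) hLe
  have hq : 1 < Real.exp 1 * L := by
    rwa [one_div, inv_lt_iff_one_lt_mul₀' (Real.exp_pos 1)] at hLe
  have hsmall := frequently_delay_ratio_le hdiff hmono hpos hPc hPnn hineq hLpos hLt
  have hone := eventually_one_le_delay_ratio hmono hpos
  have hlarge : Tendsto (fun t => z (t - 1) / z t) atTop atTop :=
    tendsto_atTop_of_eventually_mul_le hq hone fun c hc hcz =>
      eventually_mul_le_delay_ratio hdiff hpos hPc hPnn hineq hc hLt hcz
  obtain ⟨t, hsmall_t, hlarge_t⟩ :=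
    (hsmall.and_eventually (hlarge.eventually_gt_atTop ((2 / L) ^ 2))).exists
  exact hsmall_t.not_gt hlarge_t
end

section
/- Suppose a ∈ C([0,∞),ℝ), b ∈ C([0,∞),[0,∞)), c ≡ 0, τ > 0, impulse constants b_j < 1, impulse points t_j ↑ ∞, and limsup_{t→∞} ∫_{t−τ}^{t} (∏_{s−τ < t_j ≤ s}(1−b_j))·b(s)·exp(∫_{s−τ}^{s} a(u) du) ds > 1. Then every solution of x'(t) + a(t)x(t) + b(t)x(t−τ) = 0 (t ≠ t_i), Δx(t_i) = b_i x(t_i), is oscillatory. -/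
/-!
Substituting `z = x · exp (∫₀ a) · ∏_{t_j ≤ ·} (1 - b_j)` turns the impulsive equation into the
delay equation `z' = -g z(· - τ)` without impulses, where `g` is exactly the integrand of the
criterion: the product absorbs the jumps of `x`, so `z` is continuous. A positive solution `z`
decreases as soon as `z(· - τ) > 0`, hence
`z(t - τ) - z(t) = ∫_{t-τ}^t g(s) z(s - τ) ds ≥ z(t - τ) ∫_{t-τ}^t g`, and `z(t) > 0` forces
`∫_{t-τ}^t g < 1` for all large `t`, against the `limsup` condition. A negative solution is
handled through `-z`.
-/

open Filter Topology intervalIntegral MeasureTheory Set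

noncomputable section

section ImpulseProd

variable {bi ti : ℕ → ℝ} {s u : ℝ} {j k : ℕ}

/-- For increasing `ti`, the number of indices `j` with `ti j ≤ s`. -/
def impulseCount (ti : ℕ → ℝ) (s : ℝ) : ℕ := sInf {k | s < ti k}

lemma lt_apply_impulseCount (htop : Tendsto ti atTop atTop) (s : ℝ) :
    s < ti (impulseCount ti s) :=
  Nat.sInf_mem ((htop.eventually_gt_atTop s).exists)

lemma apply_le_of_lt_impulseCount (h : j < impulseCount ti s) : ti j ≤ s :=
  not_lt.1 (Nat.notMem_of_lt_sInf h)

lemma impulseCount_eq (hlt : s < ti k) (hle : ∀ j < k, ti j ≤ s) : impulseCount ti s = k :=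
  (Nat.sInf_le hlt).antisymm <| not_lt.1 fun h =>
    (hle _ h).not_gt (Nat.sInf_mem (⟨k, hlt⟩ : {k | s < ti k}.Nonempty))

lemma apply_le_iff_lt_impulseCount (hti : Monotone ti) (htop : Tendsto ti atTop atTop) :
    ti j ≤ s ↔ j < impulseCount ti s :=
  ⟨fun h => not_le.1 fun hj => (h.trans_lt (lt_apply_impulseCount htop s)).not_ge (hti hj),
    apply_le_of_lt_impulseCount⟩

lemma impulseCount_mono (htop : Tendsto ti atTop atTop) : Monotone (impulseCount ti) :=
  fun _ v huv => not_lt.1 fun h =>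
    ((apply_le_of_lt_impulseCount h).trans huv).not_gt (lt_apply_impulseCount htop v)

lemma impulseCount_apply (hti : StrictMono ti) (i : ℕ) : impulseCount ti (ti i) = i + 1 :=
  impulseCount_eq (hti i.lt_succ_self) fun _ hj => hti.monotone (Nat.le_of_lt_succ hj)

lemma eventually_impulseCount_eq {l : Filter ℝ} {r : ℝ} (hl : l ≤ 𝓝 r)
    (hlt : ∀ᶠ q in l, q < ti k) (hle : ∀ j < k, ti j < r) :
    ∀ᶠ q in l, impulseCount ti q = k := by
  have hbelow : ∀ᶠ q in l, ∀ j ∈ Finset.range k, ti j < q :=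
    (eventually_all_finset _).2 fun j hj => hl (Ioi_mem_nhds (hle j (Finset.mem_range.1 hj)))
  filter_upwards [hlt, hbelow] with q hq hq'
  exact impulseCount_eq hq fun j hj => (hq' j (Finset.mem_range.2 hj)).le

def impulseProd (bi ti : ℕ → ℝ) (s : ℝ) : ℝ :=
  ∏ j ∈ Finset.range (impulseCount ti s), (1 - bi j)

lemma impulseProd_pos (hbi : ∀ i, bi i < 1) (s : ℝ) : 0 < impulseProd bi ti s :=
  Finset.prod_pos fun j _ => sub_pos.2 (hbi j)

lemma measurable_impulseProd (htop : Tendsto ti atTop atTop) : Measurable (impulseProd bi ti) :=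
  (measurable_from_nat (f := fun k => ∏ j ∈ Finset.range k, (1 - bi j))).comp
    (impulseCount_mono htop).measurable

lemma finprod_mem_eq_impulseProd_div (hti : Monotone ti) (htop : Tendsto ti atTop atTop)
    (hbi : ∀ i, bi i < 1) (hus : u ≤ s) :
    ∏ᶠ j ∈ {j | u < ti j ∧ ti j ≤ s}, (1 - bi j) = impulseProd bi ti s / impulseProd bi ti u := by
  have hwindow : {j | u < ti j ∧ ti j ≤ s}
      = ↑(Finset.Ico (impulseCount ti u) (impulseCount ti s)) := by
    ext j
    rw [mem_ofPred_eq, Finset.coe_Ico, mem_Ico, ← not_le, apply_le_iff_lt_impulseCount hti htop,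
      apply_le_iff_lt_impulseCount hti htop, not_lt]
  rw [hwindow, finprod_mem_coe_finset, eq_div_iff (impulseProd_pos hbi u).ne', mul_comm,
    impulseProd, impulseProd, Finset.prod_range_mul_prod_Ico _ (impulseCount_mono htop hus)]

lemma exists_abs_impulseProd_div_le (htop : Tendsto ti atTop atTop) (β : ℝ) :
    ∃ C, ∀ s ≤ β, ∀ u ≤ β, |impulseProd bi ti s / impulseProd bi ti u| ≤ C := by
  set F := (Finset.range (impulseCount ti β + 1)).image
    fun k => ∏ j ∈ Finset.range k, (1 - bi j)
  have hF : ∀ s ≤ β, impulseProd bi ti s ∈ F := fun s hs =>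
    Finset.mem_image_of_mem _ (Finset.mem_range.2 (Nat.lt_succ_of_le (impulseCount_mono htop hs)))
  obtain ⟨C, hC⟩ := ((F ×ˢ F).image fun p => |p.1 / p.2|).bddAbove
  exact ⟨C, fun s hs u hu => hC (Finset.mem_image.2
    ⟨(impulseProd bi ti s, impulseProd bi ti u), Finset.mem_product.2 ⟨hF s hs, hF u hu⟩, rfl⟩)⟩

lemma eventually_impulseProd_eq_nhds (htop : Tendsto ti atTop atTop) {r : ℝ}
    (hr : r ∉ range ti) : ∀ᶠ q in 𝓝 r, impulseProd bi ti q = impulseProd bi ti r := by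
  have hcount := eventually_impulseCount_eq le_rfl
    (Iio_mem_nhds (lt_apply_impulseCount htop r)) fun j hj =>
      (apply_le_of_lt_impulseCount hj).lt_of_ne fun h => hr ⟨j, h⟩
  filter_upwards [hcount] with q hq
  rw [impulseProd, hq, impulseProd]

lemma eventually_impulseProd_eq_nhdsGE (hti : StrictMono ti) (i : ℕ) :
    ∀ᶠ q in 𝓝[≥] ti i, impulseProd bi ti q = impulseProd bi ti (ti i) := by
  filter_upwards [Ico_mem_nhdsGE (hti i.lt_succ_self)] with q hq
  rw [impulseProd, impulseProd, impulseCount_apply hti,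
    impulseCount_eq hq.2 fun j hj => (hti.monotone (Nat.le_of_lt_succ hj)).trans hq.1]

lemma eventually_impulseProd_eq_nhdsLT (hti : StrictMono ti) (i : ℕ) :
    ∀ᶠ q in 𝓝[<] ti i, impulseProd bi ti q = ∏ j ∈ Finset.range i, (1 - bi j) := by
  filter_upwards [eventually_impulseCount_eq nhdsWithin_le_nhds self_mem_nhdsWithin
    fun j hj => hti hj] with q hq
  rw [impulseProd, hq]

lemma impulseProd_apply (hti : StrictMono ti) (i : ℕ) :
    impulseProd bi ti (ti i) = (∏ j ∈ Finset.range i, (1 - bi j)) * (1 - bi i) := by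
  rw [impulseProd, impulseCount_apply hti, Finset.prod_range_succ]

end ImpulseProd

section DelayInequality

variable {z g : ℝ → ℝ} {τ T : ℝ} {S : Set ℝ}

theorem integral_lt_one_of_pos_of_hasDerivAt (hS : S.Countable) (hτ : 0 ≤ τ)
    (hg : ∀ s, 0 ≤ g s) (hg_int : ∀ α β, IntervalIntegrable g volume α β)
    (hz_cont : ∀ s, T ≤ s → ContinuousAt z s)
    (hz_deriv : ∀ s, T ≤ s → s ∉ S → HasDerivAt z (-(g s * z (s - τ))) s)
    (hz_pos : ∀ s, T ≤ s → 0 < z s) {t : ℝ} (ht : T + 3 * τ ≤ t) :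
    ∫ s in (t - τ)..t, g s < 1 := by
  have hint : ∀ α β, T + τ ≤ α → α ≤ β →
      IntervalIntegrable (fun s => g s * z (s - τ)) volume α β := fun α β hα hαβ =>
    (hg_int α β).mul_continuousOn fun s hs =>
      ((hz_cont _ (by linarith [(uIcc_of_le hαβ ▸ hs).1])).comp
        (continuous_sub_right τ).continuousAt).continuousWithinAt
  have hftc : ∀ α β, T + τ ≤ α → α ≤ β → ∫ s in α..β, g s * z (s - τ) = z α - z β := by
    intro α β hα hαβ
    have h := integral_eq_of_hasDerivAt_off_countable_of_le z _ hαβ hS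
      (fun s hs => (hz_cont s (by linarith [hs.1])).continuousWithinAt)
      (fun s hs => hz_deriv s (by linarith [hs.1.1]) hs.2) (hint α β hα hαβ).neg
    rw [intervalIntegral.integral_neg] at h
    linarith
  have hanti : ∀ α β, T + τ ≤ α → α ≤ β → z β ≤ z α := fun α β hα hαβ => by
    have : 0 ≤ ∫ s in α..β, g s * z (s - τ) := intervalIntegral.integral_nonneg hαβ fun s hs =>
      mul_nonneg (hg s) (hz_pos (s - τ) (by linarith [hs.1])).le
    linarith [hftc α β hα hαβ]
  have hbelow : z (t - τ) * ∫ s in (t - τ)..t, g s ≤ z (t - τ) - z t := by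
    rw [← intervalIntegral.integral_const_mul, ← hftc _ _ (by linarith) (by linarith)]
    refine integral_mono_on (by linarith) ((hg_int _ _).const_mul _)
      (hint _ _ (by linarith) (by linarith)) fun s hs => ?_
    rw [mul_comm]
    exact mul_le_mul_of_nonneg_left (hanti _ _ (by linarith [hs.1]) (by linarith [hs.2])) (hg s)
  have hzt := hz_pos t (by linarith)
  exact lt_of_mul_lt_mul_left (by linarith) (hz_pos (t - τ) (by linarith)).le

theorem limsup_integral_le_one_of_eventually_pos (hS : S.Countable) (hτ : 0 ≤ τ)
    (hg : ∀ s, 0 ≤ g s) (hg_int : ∀ α β, IntervalIntegrable g volume α β)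
    (hz_cont : ∀ᶠ s in atTop, ContinuousAt z s)
    (hz_deriv : ∀ᶠ s in atTop, s ∉ S → HasDerivAt z (-(g s * z (s - τ))) s)
    (hz_pos : ∀ᶠ s in atTop, 0 < z s) :
    limsup (fun t => ∫ s in (t - τ)..t, g s) atTop ≤ 1 := by
  obtain ⟨T, hT⟩ := eventually_atTop.1 ((hz_cont.and hz_deriv).and hz_pos)
  have hnonneg : ∀ t, 0 ≤ ∫ s in (t - τ)..t, g s := fun t =>
    intervalIntegral.integral_nonneg (by linarith) fun s _ => hg s
  refine limsup_le_of_le (isCoboundedUnder_le_of_eventually_le atTop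
    (Eventually.of_forall hnonneg)) ?_
  filter_upwards [eventually_ge_atTop (T + 3 * τ)] with t ht
  exact (integral_lt_one_of_pos_of_hasDerivAt hS hτ hg hg_int (fun s hs => (hT s hs).1.1)
    (fun s hs => (hT s hs).1.2) (fun s hs => (hT s hs).2) ht).le

theorem limsup_integral_le_one_of_eventually_neg (hS : S.Countable) (hτ : 0 ≤ τ)
    (hg : ∀ s, 0 ≤ g s) (hg_int : ∀ α β, IntervalIntegrable g volume α β)
    (hz_cont : ∀ᶠ s in atTop, ContinuousAt z s)
    (hz_deriv : ∀ᶠ s in atTop, s ∉ S → HasDerivAt z (-(g s * z (s - τ))) s)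
    (hz_neg : ∀ᶠ s in atTop, z s < 0) :
    limsup (fun t => ∫ s in (t - τ)..t, g s) atTop ≤ 1 :=
  limsup_integral_le_one_of_eventually_pos (z := -z) hS hτ hg hg_int
    (hz_cont.mono fun _ h => h.neg)
    (hz_deriv.mono fun _ h hs => by simpa using (h hs).neg)
    (hz_neg.mono fun _ h => neg_pos.2 h)

end DelayInequality

section TransformedSolution

variable {a b x : ℝ → ℝ} {τ : ℝ} {bi ti : ℕ → ℝ}

def transformedSolution (a : ℝ → ℝ) (bi ti : ℕ → ℝ) (x : ℝ → ℝ) (s : ℝ) : ℝ :=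
  x s * Real.exp (∫ u in (0 : ℝ)..s, a u) * impulseProd bi ti s

lemma integral_sub_primitive (ha : Continuous a) (s τ : ℝ) :
    (∫ u in (0 : ℝ)..s, a u) - ∫ u in (0 : ℝ)..(s - τ), a u = ∫ u in (s - τ)..s, a u :=
  integral_interval_sub_left (ha.intervalIntegrable 0 s) (ha.intervalIntegrable 0 (s - τ))

def delayCoeff (a b : ℝ → ℝ) (τ : ℝ) (bi ti : ℕ → ℝ) (s : ℝ) : ℝ :=
  impulseProd bi ti s / impulseProd bi ti (s - τ) * b s * Real.exp (∫ u in (s - τ)..s, a u)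

lemma delayCoeff_eq_finprod (hti : Monotone ti) (htop : Tendsto ti atTop atTop)
    (hbi : ∀ i, bi i < 1) (hτ : 0 ≤ τ) (s : ℝ) :
    delayCoeff a b τ bi ti s = (∏ᶠ j ∈ {j | s - τ < ti j ∧ ti j ≤ s}, (1 - bi j)) * b s *
      Real.exp (∫ u in (s - τ)..s, a u) := by
  rw [delayCoeff, finprod_mem_eq_impulseProd_div hti htop hbi (by linarith)]

lemma delayCoeff_nonneg (hbi : ∀ i, bi i < 1) (hb : ∀ t, 0 ≤ b t) (s : ℝ) :
    0 ≤ delayCoeff a b τ bi ti s :=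
  mul_nonneg (mul_nonneg (div_pos (impulseProd_pos hbi s) (impulseProd_pos hbi _)).le (hb s))
    (Real.exp_pos _).le

lemma intervalIntegrable_delayCoeff (ha : Continuous a) (hb : Continuous b)
    (htop : Tendsto ti atTop atTop) (α β : ℝ) :
    IntervalIntegrable (delayCoeff a b τ bi ti) volume α β := by
  have hjump : IntervalIntegrable (fun s => impulseProd bi ti s / impulseProd bi ti (s - τ))
      volume α β := by
    obtain ⟨C, hC⟩ := exists_abs_impulseProd_div_le (bi := bi) htop (max α β + |τ|)
    refine (intervalIntegrable_iff.2 (Measure.integrableOn_of_bounded (M := C)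
      measure_Ioc_lt_top.ne ((measurable_impulseProd htop).div
        ((measurable_impulseProd htop).comp (measurable_sub_const τ))).aestronglyMeasurable ?_))
    refine (ae_restrict_iff' measurableSet_uIoc).2 (ae_of_all _ fun s hs => ?_)
    exact hC s (by linarith [hs.2, abs_nonneg τ]) (s - τ) (by linarith [hs.2, neg_abs_le τ])
  have hprim : Continuous fun s => ∫ u in (0 : ℝ)..s, a u :=
    continuous_primitive (fun _ _ => ha.intervalIntegrable _ _) 0
  have hcont : Continuous fun s => b s * Real.exp (∫ u in (s - τ)..s, a u) := by
    simp only [← integral_sub_primitive ha]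
    fun_prop
  show IntervalIntegrable (fun s => delayCoeff a b τ bi ti s) volume α β
  simpa only [delayCoeff, mul_assoc] using hjump.mul_continuousOn hcont.continuousOn

lemma hasDerivAt_transformedSolution (ha : Continuous a) (hbi : ∀ i, bi i < 1)
    (htop : Tendsto ti atTop atTop) {r : ℝ} (hr : r ∉ range ti)
    (hx : HasDerivAt x (-(a r * x r + b r * x (r - τ))) r) :
    HasDerivAt (transformedSolution a bi ti x)
      (-(delayCoeff a b τ bi ti r * transformedSolution a bi ti x (r - τ))) r := by
  have hE : HasDerivAt (fun q => Real.exp (∫ u in (0 : ℝ)..q, a u))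
      (Real.exp (∫ u in (0 : ℝ)..r, a u) * a r) r :=
    (ha.integral_hasStrictDerivAt 0 r).hasDerivAt.exp
  have hlocal : transformedSolution a bi ti x =ᶠ[𝓝 r]
      fun q => x q * Real.exp (∫ u in (0 : ℝ)..q, a u) * impulseProd bi ti r := by
    filter_upwards [eventually_impulseProd_eq_nhds htop hr] with q hq
    rw [transformedSolution, hq]
  refine ((hx.mul hE).mul_const _).congr_of_eventuallyEq hlocal |>.congr_deriv ?_
  have hP := (impulseProd_pos (ti := ti) hbi (r - τ)).ne'
  rw [delayCoeff, transformedSolution, ← integral_sub_primitive ha, Real.exp_sub]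
  field_simp
  ring

lemma continuousAt_transformedSolution_apply (ha : Continuous a) (hti : StrictMono ti) (i : ℕ)
    (hrc : ContinuousWithinAt x (Ici (ti i)) (ti i))
    (himp : Tendsto x (𝓝[<] ti i) (𝓝 ((1 - bi i) * x (ti i)))) :
    ContinuousAt (transformedSolution a bi ti x) (ti i) := by
  have hE : ContinuousAt (fun q => Real.exp (∫ u in (0 : ℝ)..q, a u)) (ti i) :=
    (ha.integral_hasStrictDerivAt 0 _).hasDerivAt.exp.continuousAt
  refine continuousAt_iff_continuous_left'_right'.2 ⟨?_, ?_⟩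
  · have hlim := (himp.mul hE.continuousWithinAt).mul_const (∏ j ∈ Finset.range i, (1 - bi j))
    rw [show (1 - bi i) * x (ti i) * Real.exp (∫ u in (0 : ℝ)..ti i, a u) *
        ∏ j ∈ Finset.range i, (1 - bi j) = transformedSolution a bi ti x (ti i) by
      rw [transformedSolution, impulseProd_apply hti]; ring] at hlim
    refine hlim.congr' ?_
    filter_upwards [eventually_impulseProd_eq_nhdsLT hti i] with q hq
    rw [transformedSolution, hq]
  · have hright : ContinuousWithinAt (transformedSolution a bi ti x) (Ici (ti i)) (ti i) := by
      refine ((hrc.mul hE.continuousWithinAt).mul_const (impulseProd bi ti (ti i))).congr' ?_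
      filter_upwards [eventually_impulseProd_eq_nhdsGE hti i] with q hq
      rw [transformedSolution, hq, Pi.mul_apply]
    exact hright.mono Ioi_subset_Ici_self

end TransformedSolution

theorem oscillation_corollary_one_general
    (a b : ℝ → ℝ) (ha : Continuous a) (hb : Continuous b) (hbnn : ∀ t, 0 ≤ b t)
    (τ : ℝ) (hτ : 0 < τ)
    (bi : ℕ → ℝ) (hbi : ∀ i, bi i < 1)
    (ti : ℕ → ℝ) (hti : StrictMono ti)
    (htiTop : Tendsto ti atTop atTop)
    (hcrit : 1 < Filter.limsup (fun t => ∫ s in (t - τ)..t,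
      (∏ᶠ j ∈ {j : ℕ | s - τ < ti j ∧ ti j ≤ s}, (1 - bi j)) * b s *
        Real.exp (∫ u in (s - τ)..s, a u)) Filter.atTop)
    (x : ℝ → ℝ)
    (hsol : ∀ t, 0 < t → (∀ i, t ≠ ti i) →
      HasDerivAt x (-(a t * x t + b t * x (t - τ))) t)
    (hrc : ∀ i, ContinuousWithinAt x (Set.Ici (ti i)) (ti i))
    (himp : ∀ i, Tendsto x (nhdsWithin (ti i) (Set.Iio (ti i)))
      (nhds ((1 - bi i) * x (ti i)))) :
    (¬ ∃ T, ∀ t, T < t → 0 < x t) ∧ (¬ ∃ T, ∀ t, T < t → x t < 0) := by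
  set z := transformedSolution a bi ti x
  have hcrit' : 1 < limsup (fun t => ∫ s in (t - τ)..t, delayCoeff a b τ bi ti s) atTop := by
    simpa only [delayCoeff_eq_finprod hti.monotone htiTop hbi hτ.le] using hcrit
  have hz_deriv : ∀ᶠ s in atTop, s ∉ range ti →
      HasDerivAt z (-(delayCoeff a b τ bi ti s * z (s - τ))) s := by
    filter_upwards [eventually_gt_atTop 0] with s hs hsi
    exact hasDerivAt_transformedSolution ha hbi htiTop hsi (hsol s hs fun i h => hsi ⟨i, h.symm⟩)
  have hz_cont : ∀ᶠ s in atTop, ContinuousAt z s := by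
    filter_upwards [hz_deriv] with s hs
    by_cases hsi : s ∈ range ti
    · obtain ⟨i, rfl⟩ := hsi
      exact continuousAt_transformedSolution_apply ha hti i (hrc i) (himp i)
    · exact (hs hsi).continuousAt
  have hg := delayCoeff_nonneg (a := a) (τ := τ) (ti := ti) hbi hbnn
  have hg_int := intervalIntegrable_delayCoeff (τ := τ) (bi := bi) ha hb htiTop
  refine ⟨fun ⟨T, hT⟩ => hcrit'.not_ge ?_, fun ⟨T, hT⟩ => hcrit'.not_ge ?_⟩
  · refine limsup_integral_le_one_of_eventually_pos (countable_range ti) hτ.le hg hg_int hz_cont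
      hz_deriv ?_
    filter_upwards [eventually_gt_atTop T] with s hs
    exact mul_pos (mul_pos (hT s hs) (Real.exp_pos _)) (impulseProd_pos hbi s)
  · refine limsup_integral_le_one_of_eventually_neg (countable_range ti) hτ.le hg hg_int hz_cont
      hz_deriv ?_
    filter_upwards [eventually_gt_atTop T] with s hs
    exact mul_neg_of_neg_of_pos (mul_neg_of_neg_of_pos (hT s hs) (Real.exp_pos _))
      (impulseProd_pos hbi s)

/-- Corollary 1: if
`limsup_{t→∞} ∫_{t-τ}^{t} (∏_{s-τ < t_j ≤ s}(1-b_j)) b(s) exp(∫_{s-τ}^{s} a) ds > 1`,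
then every solution of `x'(t) + a(t)x(t) + b(t)x(t-τ) = 0` (`t ≠ t_i`),
`Δx(t_i) = b_i x(t_i)`, is oscillatory (neither eventually positive nor eventually
negative). -/
theorem oscillation_corollary_one
    (a b : ℝ → ℝ) (ha : Continuous a) (hb : Continuous b) (hbnn : ∀ t, 0 ≤ b t)
    (τ : ℝ) (hτ : 0 < τ)
    (bi : ℕ → ℝ) (hbi : ∀ i, bi i < 1)
    (ti : ℕ → ℝ) (hti : StrictMono ti) (hti0 : 0 < ti 0)
    (htiTop : Tendsto ti atTop atTop)
    (hcrit : 1 < Filter.limsup (fun t => ∫ s in (t - τ)..t,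
      (∏ᶠ j ∈ {j : ℕ | s - τ < ti j ∧ ti j ≤ s}, (1 - bi j)) * b s *
        Real.exp (∫ u in (s - τ)..s, a u)) Filter.atTop)
    (x : ℝ → ℝ)
    (hsol : ∀ t, 0 < t → (∀ i, t ≠ ti i) →
      HasDerivAt x (-(a t * x t + b t * x (t - τ))) t)
    (hrc : ∀ i, ContinuousWithinAt x (Set.Ici (ti i)) (ti i))
    (himp : ∀ i, Tendsto x (nhdsWithin (ti i) (Set.Iio (ti i)))
      (nhds ((1 - bi i) * x (ti i)))) :
    (¬ ∃ T, ∀ t, T < t → 0 < x t) ∧ (¬ ∃ T, ∀ t, T < t → x t < 0) :=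
  oscillation_corollary_one_general a b ha hb hbnn τ hτ bi hbi ti hti htiTop hcrit x hsol hrc himp
end
end

section
/- Suppose a ∈ C([0,∞),ℝ), c ∈ C([0,∞),[0,∞)), b ≡ 0, impulse constants b_j < 1, impulse points t_j ↑ ∞, and limsup_{n→∞} ∫_{n}^{n+1} (∏_{n−1 < t_j ≤ s}(1−b_j))·c(s)·exp(∫_{n−1}^{s} a(u) du) ds > 1 (n ranging over positive integers). Then every solution of x'(t) + a(t)x(t) + c(t)x([t−1]) = 0 (t ≠ t_i), Δx(t_i) = b_i x(t_i), is oscillatory. -/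
/-!
Suppose `x > 0` eventually and put `m = n - 1`. The weighted function
`y(t) = x(t) * ∏_{m < t_j ≤ t} (1 - b_j) * exp (∫_m^t a)` is continuous across the impulses, because
the jump of `x` at `t_j` is cancelled by the new factor `1 - b_j`, and between impulses
`y' = -(∏ (1 - b_j)) c exp (∫_m^t a) x(⌊t - 1⌋) ≤ 0`. On `(n - 1, n)` and `(n, n + 1)` the delayed
value `x(⌊t - 1⌋)` is the constant `x(n - 2)`, resp. `x(n - 1)`, so integrating `y'` gives
`x(n - 1) ∫_n^{n+1} … = y(n) - y(n + 1) < y(n) ≤ y(n - 1) = x(n - 1)`: every integral of the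
criterion is at most `1` for large `n`. Since `-x` is again a solution, `x` is not eventually
negative either.
-/

open Filter Topology intervalIntegral MeasureTheory Set Real

noncomputable def impulseProduct (b τ : ℕ → ℝ) (m s : ℝ) : ℝ :=
  ∏ᶠ j ∈ {j : ℕ | m < τ j ∧ τ j ≤ s}, (1 - b j)

noncomputable def jumpFactor (b τ : ℕ → ℝ) (s : ℝ) : ℝ :=
  ∏ᶠ j ∈ {j : ℕ | τ j = s}, (1 - b j)

noncomputable def weightedSolution (a : ℝ → ℝ) (b τ : ℕ → ℝ) (m : ℝ) (x : ℝ → ℝ) (t : ℝ) : ℝ :=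
  x t * impulseProduct b τ m t * exp (∫ u in m..t, a u)

/-- With `x` right-continuous, `Δx(τ i) = b i * x(τ i)` says that `x(τ i⁻) = (1 - b i) * x(τ i)`. -/
structure IsImpulsiveSolution (a c : ℝ → ℝ) (b τ : ℕ → ℝ) (x : ℝ → ℝ) : Prop where
  hasDerivAt : ∀ t, 0 < t → (∀ i, t ≠ τ i) →
    HasDerivAt x (-(a t * x t + c t * x ((⌊t - 1⌋ : ℤ) : ℝ))) t
  continuousWithinAt_Ici_impulse : ∀ i, ContinuousWithinAt x (Ici (τ i)) (τ i)
  tendsto_nhdsLT_impulse : ∀ i, Tendsto x (𝓝[<] (τ i)) (𝓝 ((1 - b i) * x (τ i)))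

theorem tendsto_mul_of_eventually_eq_mul {α : Type*} {l : Filter α} {f g : α → ℝ} {r A B : ℝ}
    (hr : r ≠ 0) (hf : Tendsto f l (𝓝 (r * A))) (hg : ∀ᶠ t in l, B = r * g t) :
    Tendsto (fun t => f t * g t) l (𝓝 (A * B)) := by
  have h := hf.mul_const (B / r)
  rw [show r * A * (B / r) = A * B by field_simp] at h
  refine h.congr' ?_
  filter_upwards [hg] with t ht
  rw [ht]
  field_simp

theorem hasDerivAt_exp_integral {a : ℝ → ℝ} (ha : Continuous a) (m t : ℝ) :
    HasDerivAt (fun t => exp (∫ u in m..t, a u)) (exp (∫ u in m..t, a u) * a t) t :=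
  (ha.integral_hasStrictDerivAt m t).hasDerivAt.exp

theorem continuous_exp_integral {a : ℝ → ℝ} (ha : Continuous a) (m : ℝ) :
    Continuous fun t => exp (∫ u in m..t, a u) :=
  continuous_iff_continuousAt.2 fun t => (hasDerivAt_exp_integral ha m t).continuousAt

section Impulses

variable {b τ : ℕ → ℝ} {m s : ℝ}

theorem finprod_mem_one_sub_pos (hb : ∀ j, b j < 1) (S : Set ℕ) : 0 < ∏ᶠ j ∈ S, (1 - b j) :=
  finprod_mem_induction (0 < ·) one_pos (fun _ _ => mul_pos) fun j _ => sub_pos.2 (hb j)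

theorem finite_setOf_le (hτ : Tendsto τ atTop atTop) (s : ℝ) : {j | τ j ≤ s}.Finite := by
  have h := hτ.eventually_gt_atTop s
  rw [← Nat.cofinite_eq_atTop, eventually_cofinite] at h
  simpa using h

theorem impulseProduct_self : impulseProduct b τ m m = 1 :=
  finprod_mem_of_eqOn_one fun _ hj => absurd (hj.1.trans_le hj.2) (lt_irrefl m)

theorem impulseProduct_eq_prod_range {N : ℕ} (hN : ∀ j, N ≤ j → s < τ j) :
    impulseProduct b τ m s =
      ∏ j ∈ Finset.range N, if m < τ j ∧ τ j ≤ s then 1 - b j else 1 := by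
  rw [← Finset.prod_filter]
  refine finprod_mem_eq_prod_of_subset _ (fun j hj => ?_) fun j hj => (Finset.mem_filter.1 hj).2
  simp only [Finset.coe_filter, Finset.mem_range, mem_ofPred_eq]
  exact ⟨not_le.1 fun h => (hN j h).not_ge hj.1.2, hj.1⟩

theorem measurable_impulseProduct (hτ : Tendsto τ atTop atTop) :
    Measurable (impulseProduct b τ m) := by
  refine measurable_of_tendsto_metrizable
    (f := fun N s => ∏ j ∈ Finset.range N, if m < τ j ∧ τ j ≤ s then 1 - b j else 1)
    (fun N => Finset.measurable_prod _ fun j _ => Measurable.ite ?_ measurable_const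
      measurable_const) (tendsto_pi_nhds.2 fun s => ?_)
  · exact (MeasurableSet.const _).inter measurableSet_Ici
  · obtain ⟨N₀, hN₀⟩ := eventually_atTop.1 (hτ.eventually_gt_atTop s)
    refine tendsto_const_nhds.congr' (eventually_atTop.2 ⟨N₀, fun N hN => ?_⟩)
    exact impulseProduct_eq_prod_range fun j hj => hN₀ j (hN.trans hj)

theorem exists_abs_impulseProduct_le (hτ : Tendsto τ atTop atTop) (R : ℝ) :
    ∃ C, ∀ s ≤ R, |impulseProduct b τ m s| ≤ C := by
  obtain ⟨N, hN⟩ := eventually_atTop.1 (hτ.eventually_gt_atTop R)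
  refine ⟨∏ j ∈ Finset.range N, max 1 |1 - b j|, fun s hs => ?_⟩
  rw [impulseProduct_eq_prod_range fun j hj => hs.trans_lt (hN j hj), Finset.abs_prod]
  refine Finset.prod_le_prod (fun _ _ => abs_nonneg _) fun j _ => ?_
  split_ifs <;> simp

theorem intervalIntegrable_impulseProduct_mul {g : ℝ → ℝ} (hτ : Tendsto τ atTop atTop)
    (hg : Continuous g) (α β : ℝ) :
    IntervalIntegrable (fun s => impulseProduct b τ m s * g s) volume α β := by
  obtain ⟨C, hC⟩ := exists_abs_impulseProduct_le (b := b) (m := m) hτ (max α β)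
  have : IsFiniteMeasure (volume.restrict (uIcc α β)) :=
    isFiniteMeasure_restrict.2 measure_Icc_lt_top.ne
  have hQ : IntegrableOn (impulseProduct b τ m) (uIcc α β) :=
    Integrable.of_bound (measurable_impulseProduct hτ).aestronglyMeasurable C
      (ae_restrict_of_forall_mem measurableSet_uIcc fun s hs => hC s hs.2)
  exact (hQ.mul_continuousOn hg.continuousOn isCompact_uIcc).intervalIntegrable

theorem eventually_nhdsLT_le_iff (hτ : Tendsto τ atTop atTop) (s : ℝ) :
    ∀ᶠ t in 𝓝[<] s, ∀ j, τ j ≤ t ↔ τ j < s := by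
  have h : ∀ j ∈ {j | τ j ≤ s}, ∀ᶠ t in 𝓝[<] s, τ j ≤ t ↔ τ j < s := by
    intro j (hj : τ j ≤ s)
    rcases hj.lt_or_eq with hlt | heq
    · filter_upwards [nhdsWithin_le_nhds (Ioi_mem_nhds hlt)] with t (ht : τ j < t)
      exact iff_of_true ht.le hlt
    · filter_upwards [self_mem_nhdsWithin] with t (ht : t < s)
      rw [heq]
      exact iff_of_false ht.not_ge (lt_irrefl s)
  filter_upwards [(eventually_all_finite (finite_setOf_le hτ s)).2 h, self_mem_nhdsWithin]
    with t ht (hts : t < s) j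
  by_cases hj : τ j ≤ s
  · exact ht j hj
  · exact iff_of_false (fun h => hj (h.trans hts.le)) fun h => hj h.le

theorem eventually_nhdsGE_le_iff (hτ : Tendsto τ atTop atTop) (s : ℝ) :
    ∀ᶠ t in 𝓝[≥] s, ∀ j, τ j ≤ t ↔ τ j ≤ s := by
  have h : ∀ j ∈ {j | τ j ≤ s + 1}, ∀ᶠ t in 𝓝[≥] s, τ j ≤ t ↔ τ j ≤ s := by
    intro j _
    rcases le_or_gt (τ j) s with hle | hlt
    · filter_upwards [self_mem_nhdsWithin] with t (ht : s ≤ t)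
      exact iff_of_true (hle.trans ht) hle
    · filter_upwards [nhdsWithin_le_nhds (Iio_mem_nhds hlt)] with t (ht : t < τ j)
      exact iff_of_false ht.not_ge hlt.not_ge
  filter_upwards [(eventually_all_finite (finite_setOf_le hτ (s + 1))).2 h,
    nhdsWithin_le_nhds (Iio_mem_nhds (lt_add_one s))] with t ht (hts : t < s + 1) j
  by_cases hj : τ j ≤ s + 1
  · exact ht j hj
  · push Not at hj
    exact iff_of_false (hts.trans hj).not_ge ((lt_add_one s).trans hj).not_ge

theorem eventually_nhdsGE_impulseProduct (hτ : Tendsto τ atTop atTop) :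
    ∀ᶠ t in 𝓝[≥] s, impulseProduct b τ m t = impulseProduct b τ m s := by
  filter_upwards [eventually_nhdsGE_le_iff hτ s] with t ht
  simp only [impulseProduct, ht]

theorem eventually_nhds_impulseProduct (hτ : Tendsto τ atTop atTop) (hs : s ∉ range τ) :
    ∀ᶠ t in 𝓝 s, impulseProduct b τ m t = impulseProduct b τ m s := by
  rw [← nhdsLT_sup_nhdsGE, eventually_sup]
  refine ⟨?_, eventually_nhdsGE_impulseProduct hτ⟩
  filter_upwards [eventually_nhdsLT_le_iff hτ s] with t ht
  have hle : ∀ j, τ j ≤ t ↔ τ j ≤ s := fun j =>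
    (ht j).trans ⟨le_of_lt, fun h => h.lt_of_ne fun e => hs ⟨j, e⟩⟩
  simp only [impulseProduct, hle]

theorem eventually_nhdsLT_impulseProduct (hτ : Tendsto τ atTop atTop) (hms : m < s) :
    ∀ᶠ t in 𝓝[<] s, impulseProduct b τ m s = jumpFactor b τ s * impulseProduct b τ m t := by
  filter_upwards [eventually_nhdsLT_le_iff hτ s] with t ht
  have hsplit : {j | m < τ j ∧ τ j ≤ s} = {j | τ j = s} ∪ {j | m < τ j ∧ τ j ≤ t} := by
    ext j
    simp only [mem_union, mem_ofPred_eq, ht j]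
    constructor
    · rintro ⟨hm, hle⟩
      exact hle.eq_or_lt.imp id fun hlt => ⟨hm, hlt⟩
    · rintro (e | ⟨hm, hlt⟩)
      · exact ⟨e ▸ hms, e.le⟩
      · exact ⟨hm, hlt.le⟩
  rw [impulseProduct, hsplit, finprod_mem_union]
  · rfl
  · exact disjoint_left.2 fun j (e : τ j = s) h => ((ht j).1 h.2).ne e
  · exact (finite_setOf_le hτ s).subset fun j (e : τ j = s) => e.le
  · exact (finite_setOf_le hτ s).subset fun j h => ((ht j).1 h.2).le

theorem jumpFactor_apply (hτ : Function.Injective τ) (k : ℕ) : jumpFactor b τ (τ k) = 1 - b k := by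
  rw [jumpFactor, show {j | τ j = τ k} = {k} from ext fun j => hτ.eq_iff, finprod_mem_singleton]

theorem jumpFactor_of_notMem (hs : s ∉ range τ) : jumpFactor b τ s = 1 :=
  finprod_mem_of_eqOn_one fun j hj => absurd ⟨j, hj⟩ hs

theorem impulseProduct_mul_mul_exp_nonneg {c : ℝ → ℝ} (hb : ∀ j, b j < 1) (hc : ∀ t, 0 ≤ c t)
    (e : ℝ) : 0 ≤ impulseProduct b τ m s * c s * exp e :=
  mul_nonneg (mul_nonneg (finprod_mem_one_sub_pos hb _).le (hc s)) (exp_pos e).le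

end Impulses

namespace IsImpulsiveSolution

variable {a c : ℝ → ℝ} {b τ : ℕ → ℝ} {x : ℝ → ℝ} {m s : ℝ}

theorem neg (hx : IsImpulsiveSolution a c b τ x) : IsImpulsiveSolution a c b τ (-x) where
  hasDerivAt t ht hne :=
    (hx.hasDerivAt t ht hne).neg.congr_deriv (by simp only [Pi.neg_apply]; ring)
  continuousWithinAt_Ici_impulse i := (hx.continuousWithinAt_Ici_impulse i).neg
  tendsto_nhdsLT_impulse i := by
    rw [Pi.neg_apply, mul_neg]
    exact (hx.tendsto_nhdsLT_impulse i).neg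

theorem continuousWithinAt_Ici (hx : IsImpulsiveSolution a c b τ x) (hs : 0 < s) :
    ContinuousWithinAt x (Ici s) s := by
  by_cases h : s ∈ range τ
  · obtain ⟨i, rfl⟩ := h
    exact hx.continuousWithinAt_Ici_impulse i
  · exact (hx.hasDerivAt s hs fun i e => h ⟨i, e.symm⟩).continuousAt.continuousWithinAt

theorem tendsto_nhdsLT (hx : IsImpulsiveSolution a c b τ x) (hτ : Function.Injective τ)
    (hs : 0 < s) : Tendsto x (𝓝[<] s) (𝓝 (jumpFactor b τ s * x s)) := by
  by_cases h : s ∈ range τ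
  · obtain ⟨i, rfl⟩ := h
    rw [jumpFactor_apply hτ]
    exact hx.tendsto_nhdsLT_impulse i
  · rw [jumpFactor_of_notMem h, one_mul]
    exact (hx.hasDerivAt s hs fun i e => h ⟨i, e.symm⟩).continuousAt.continuousWithinAt

theorem continuousWithinAt_Ici_mul_impulseProduct (hx : IsImpulsiveSolution a c b τ x)
    (hτ : Tendsto τ atTop atTop) (hs : 0 < s) :
    ContinuousWithinAt (fun t => x t * impulseProduct b τ m t) (Ici s) s :=
  (hx.continuousWithinAt_Ici hs).mul
    (tendsto_const_nhds.congr' ((eventually_nhdsGE_impulseProduct hτ).mono fun _ h => h.symm))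

theorem continuousAt_mul_impulseProduct (hx : IsImpulsiveSolution a c b τ x)
    (hb : ∀ j, b j < 1) (hτ : Function.Injective τ) (hτ' : Tendsto τ atTop atTop) (hs : 0 < s)
    (hms : m < s) : ContinuousAt (fun t => x t * impulseProduct b τ m t) s := by
  refine continuousAt_iff_continuous_left_right.2
    ⟨continuousWithinAt_Iio_iff_Iic.1 ?_, hx.continuousWithinAt_Ici_mul_impulseProduct hτ' hs⟩
  exact tendsto_mul_of_eventually_eq_mul (finprod_mem_one_sub_pos hb _).ne'
    (hx.tendsto_nhdsLT hτ hs) (eventually_nhdsLT_impulseProduct hτ' hms)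

theorem hasDerivAt_weightedSolution (hx : IsImpulsiveSolution a c b τ x) (ha : Continuous a)
    (hτ : Tendsto τ atTop atTop) (hs : 0 < s) (hsτ : s ∉ range τ) :
    HasDerivAt (weightedSolution a b τ m x)
      (-(impulseProduct b τ m s * c s * exp (∫ u in m..s, a u) * x ((⌊s - 1⌋ : ℤ) : ℝ))) s := by
  have hxQ : HasDerivAt (fun t => x t * impulseProduct b τ m t)
      (-(a s * x s + c s * x ((⌊s - 1⌋ : ℤ) : ℝ)) * impulseProduct b τ m s) s :=
    ((hx.hasDerivAt s hs fun i e => hsτ ⟨i, e.symm⟩).mul_const _).congr_of_eventuallyEq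
      ((eventually_nhds_impulseProduct (b := b) (m := m) hτ hsτ).mono fun t ht =>
        congrArg (x t * ·) ht)
  exact (hxQ.mul (hasDerivAt_exp_integral ha m s)).congr_deriv (by ring)

theorem weightedSolution_add_one_sub (hx : IsImpulsiveSolution a c b τ x) (ha : Continuous a)
    (hc : Continuous c) (hb : ∀ j, b j < 1) (hτ : Function.Injective τ)
    (hτ' : Tendsto τ atTop atTop) {k : ℤ} (hk : 0 < k) (hmk : m ≤ k) :
    weightedSolution a b τ m x (k + 1) - weightedSolution a b τ m x k =
      -(x (k - 1) * ∫ s in (k : ℝ)..k + 1,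
        impulseProduct b τ m s * c s * exp (∫ u in m..s, a u)) := by
  have hk' : (0 : ℝ) < k := by exact_mod_cast hk
  have hfloor : ∀ s ∈ Ioo (k : ℝ) (k + 1), ⌊s - 1⌋ = k - 1 := fun s hs =>
    Int.floor_eq_iff.2 ⟨by push_cast; linarith [hs.1], by push_cast; linarith [hs.2]⟩
  have hcont : ContinuousOn (weightedSolution a b τ m x) (Icc k (k + 1)) := by
    intro s hs
    have hE := (continuous_exp_integral ha m).continuousAt (x := s)
    rcases hs.1.eq_or_lt with rfl | hks
    · exact ((hx.continuousWithinAt_Ici_mul_impulseProduct hτ' hk').mul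
        hE.continuousWithinAt).mono Icc_subset_Ici_self
    · exact ((hx.continuousAt_mul_impulseProduct hb hτ hτ' (by linarith)
        (by linarith)).mul hE).continuousWithinAt
  have hint : IntervalIntegrable (fun s => impulseProduct b τ m s * c s *
      exp (∫ u in m..s, a u)) volume k (k + 1) := by
    simpa only [mul_assoc] using
      intervalIntegrable_impulseProduct_mul (g := fun s => c s * exp (∫ u in m..s, a u)) hτ'
        (hc.mul (continuous_exp_integral ha m)) k (k + 1)
  rw [← intervalIntegral.integral_const_mul, ← intervalIntegral.integral_neg]
  refine (integral_eq_of_hasDerivAt_off_countable_of_le _ _ (by linarith) (countable_range τ)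
    hcont (fun s hs => ?_) (hint.const_mul _).neg).symm
  refine (hx.hasDerivAt_weightedSolution ha hτ' (hk'.trans hs.1.1) hs.2).congr_deriv ?_
  rw [hfloor s hs.1, Pi.neg_apply]
  push_cast
  ring

theorem integral_le_one (hx : IsImpulsiveSolution a c b τ x) (ha : Continuous a)
    (hc : Continuous c) (hcnn : ∀ t, 0 ≤ c t) (hb : ∀ j, b j < 1) (hτ : Function.Injective τ)
    (hτ' : Tendsto τ atTop atTop) {n : ℕ} (hn : 2 ≤ n)
    (hpos : ∀ t, (n : ℝ) - 2 ≤ t → 0 < x t) :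
    ∫ s in (n : ℝ)..(n : ℝ) + 1,
      impulseProduct b τ ((n : ℝ) - 1) s * c s * exp (∫ u in (n : ℝ) - 1..s, a u) ≤ 1 := by
  set y := weightedSolution a b τ ((n : ℝ) - 1) x
  have h₁ := hx.weightedSolution_add_one_sub ha hc hb hτ hτ' (k := (n : ℤ) - 1)
    (m := (n : ℝ) - 1) (by omega) (by push_cast; rfl)
  have h₂ := hx.weightedSolution_add_one_sub ha hc hb hτ hτ' (k := n)
    (m := (n : ℝ) - 1) (by omega) (by push_cast; linarith)
  push_cast at h₁ h₂
  rw [sub_add_cancel] at h₁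
  have hI₁ : 0 ≤ ∫ s in (n : ℝ) - 1..n,
      impulseProduct b τ ((n : ℝ) - 1) s * c s * exp (∫ u in (n : ℝ) - 1..s, a u) :=
    integral_nonneg (by linarith) fun s _ => impulseProduct_mul_mul_exp_nonneg hb hcnn _
  have hy₀ : y ((n : ℝ) - 1) = x ((n : ℝ) - 1) := by
    simp [y, weightedSolution, impulseProduct_self]
  have hy₂ : 0 < y ((n : ℝ) + 1) :=
    mul_pos (mul_pos (hpos _ (by linarith)) (finprod_mem_one_sub_pos hb _)) (exp_pos _)
  have hx₁ : 0 < x ((n : ℝ) - 1) := hpos _ (by linarith)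
  have hx₂ : 0 < x ((n : ℝ) - 1 - 1) := hpos _ (by linarith)
  refine le_of_mul_le_mul_left ?_ hx₁
  linarith [mul_nonneg hx₂.le hI₁]

theorem not_eventually_pos (hx : IsImpulsiveSolution a c b τ x) (ha : Continuous a)
    (hc : Continuous c) (hcnn : ∀ t, 0 ≤ c t) (hb : ∀ j, b j < 1) (hτ : Function.Injective τ)
    (hτ' : Tendsto τ atTop atTop)
    (hcrit : 1 < limsup (fun n : ℕ => ∫ s in (n : ℝ)..(n : ℝ) + 1,
      impulseProduct b τ ((n : ℝ) - 1) s * c s * exp (∫ u in (n : ℝ) - 1..s, a u)) atTop) :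
    ¬ ∃ T, ∀ t, T < t → 0 < x t := by
  rintro ⟨T, hT⟩
  refine hcrit.not_ge (limsup_le_of_le (isCoboundedUnder_le_of_le atTop fun n =>
    integral_nonneg (by linarith) fun s _ => impulseProduct_mul_mul_exp_nonneg hb hcnn _) ?_)
  filter_upwards [eventually_ge_atTop 2,
    tendsto_natCast_atTop_atTop.eventually_gt_atTop (T + 2)] with n hn hnT
  exact hx.integral_le_one ha hc hcnn hb hτ hτ' hn fun t ht => hT t (by linarith)

end IsImpulsiveSolution

theorem oscillation_corollary_two_general
    (a c : ℝ → ℝ) (ha : Continuous a) (hc : Continuous c) (hcnn : ∀ t, 0 ≤ c t)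
    (bi : ℕ → ℝ) (hbi : ∀ i, bi i < 1)
    (ti : ℕ → ℝ) (hti : StrictMono ti)
    (htiTop : Tendsto ti atTop atTop)
    (hcrit : 1 < Filter.limsup (fun n : ℕ => ∫ s in (n : ℝ)..((n : ℝ) + 1),
      (∏ᶠ j ∈ {j : ℕ | (n : ℝ) - 1 < ti j ∧ ti j ≤ s}, (1 - bi j)) * c s *
        Real.exp (∫ u in ((n : ℝ) - 1)..s, a u)) Filter.atTop)
    (x : ℝ → ℝ)
    (hsol : ∀ t, 0 < t → (∀ i, t ≠ ti i) →
      HasDerivAt x (-(a t * x t + c t * x ((⌊t - 1⌋ : ℤ) : ℝ))) t)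
    (hrc : ∀ i, ContinuousWithinAt x (Set.Ici (ti i)) (ti i))
    (himp : ∀ i, Tendsto x (nhdsWithin (ti i) (Set.Iio (ti i)))
      (nhds ((1 - bi i) * x (ti i)))) :
    (¬ ∃ T, ∀ t, T < t → 0 < x t) ∧ (¬ ∃ T, ∀ t, T < t → x t < 0) := by
  have hx : IsImpulsiveSolution a c bi ti x := ⟨hsol, hrc, himp⟩
  refine ⟨hx.not_eventually_pos ha hc hcnn hbi hti.injective htiTop hcrit, fun ⟨T, hT⟩ => ?_⟩
  exact hx.neg.not_eventually_pos ha hc hcnn hbi hti.injective htiTop hcrit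
    ⟨T, fun t ht => neg_pos.2 (hT t ht)⟩

/-- Corollary 2: if
`limsup_{n→∞} ∫_{n}^{n+1} (∏_{n-1 < t_j ≤ s}(1-b_j)) c(s) exp(∫_{n-1}^{s} a) ds > 1`
(`n` ranging over positive integers), then every solution of
`x'(t) + a(t)x(t) + c(t)x(⌊t-1⌋) = 0` (`t ≠ t_i`), `Δx(t_i) = b_i x(t_i)`, is
oscillatory. -/
theorem oscillation_corollary_two
    (a c : ℝ → ℝ) (ha : Continuous a) (hc : Continuous c) (hcnn : ∀ t, 0 ≤ c t)
    (bi : ℕ → ℝ) (hbi : ∀ i, bi i < 1)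
    (ti : ℕ → ℝ) (hti : StrictMono ti) (hti0 : 0 < ti 0)
    (htiTop : Tendsto ti atTop atTop)
    (hcrit : 1 < Filter.limsup (fun n : ℕ => ∫ s in (n : ℝ)..((n : ℝ) + 1),
      (∏ᶠ j ∈ {j : ℕ | (n : ℝ) - 1 < ti j ∧ ti j ≤ s}, (1 - bi j)) * c s *
        Real.exp (∫ u in ((n : ℝ) - 1)..s, a u)) Filter.atTop)
    (x : ℝ → ℝ)
    (hsol : ∀ t, 0 < t → (∀ i, t ≠ ti i) →
      HasDerivAt x (-(a t * x t + c t * x ((⌊t - 1⌋ : ℤ) : ℝ))) t)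
    (hrc : ∀ i, ContinuousWithinAt x (Set.Ici (ti i)) (ti i))
    (himp : ∀ i, Tendsto x (nhdsWithin (ti i) (Set.Iio (ti i)))
      (nhds ((1 - bi i) * x (ti i)))) :
    (¬ ∃ T, ∀ t, T < t → 0 < x t) ∧ (¬ ∃ T, ∀ t, T < t → x t < 0) :=
  oscillation_corollary_two_general a c ha hc hcnn bi hbi ti hti htiTop hcrit x hsol hrc himp
end

section
/- Under the standing hypotheses (a continuous; b, c continuous nonnegative; τ > 0; b_j < 1; t_j ↑ ∞; l = min{τ,1}), if limsup_{t→∞} ∫_{t−l}^{t} (∏_{s−τ < t_j ≤ s}(1−b_j))·b(s)·exp(∫_{s−τ}^{s} a(u) du) ds > 1, then every solution of x'(t) + a(t)x(t) + b(t)x(t−τ) + c(t)x([t−1]) = 0 (t ≠ t_i), Δx(t_i) = b_i x(t_i), is oscillatory. -/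
/-!
Suppose `x > 0` eventually; the case `x < 0` follows by applying this to `-x`. The integrating
factor `z(s) = x(s) · ∏_{t₀ < t_j ≤ s} (1 - b_j) · exp ∫_{t₀}^{s} a` removes both the term `a x`
and the jumps: `z` is continuous, and off the impulse times
`z' = -(b(s) x(s - τ) + c(s) x(⌊s - 1⌋)) · (weight) ≤ -B(s) z(s - τ)`, where `B` is the integrand
of the limsup condition. Hence `z` is positive and decreasing, and on a window `[t - l, t]` with
`l ≤ τ` we have `z(s - τ) ≥ z(t - l)`, so integrating gives
`0 < z(t) ≤ z(t - l) (1 - ∫_{t-l}^{t} B)`: the window integrals of `B` stay below `1` for all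
large `t`.
-/

open Filter Topology intervalIntegral Set MeasureTheory

theorem sub_le_integral_of_hasDerivAt_of_le_off_finite {f f' g : ℝ → ℝ} {S : Set ℝ}
    (hS : S.Finite) {a b : ℝ} (hab : a ≤ b) (hf : ContinuousOn f (Icc a b))
    (hg : IntegrableOn g (Icc a b)) (hf' : ∀ x ∈ Ioo a b \ S, HasDerivAt f (f' x) x)
    (hle : ∀ x ∈ Ioo a b \ S, f' x ≤ g x) :
    f b - f a ≤ ∫ x in a..b, g x := by
  induction S, hS using Set.Finite.induction_on generalizing a b with
  | empty =>
    exact sub_le_integral_of_hasDeriv_right_of_le hab hf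
      (fun x hx => (hf' x ⟨hx, notMem_empty x⟩).hasDerivWithinAt) hg
      (fun x hx => hle x ⟨hx, notMem_empty x⟩)
  | @insert m S _ _ ih =>
    by_cases hm : m ∈ Ioo a b
    · have hleft : f m - f a ≤ ∫ x in a..m, g x :=
        ih hm.1.le (hf.mono (Icc_subset_Icc_right hm.2.le))
          (hg.mono_set (Icc_subset_Icc_right hm.2.le))
          (fun x hx => hf' x ⟨⟨hx.1.1, hx.1.2.trans hm.2⟩, by
            simpa [hx.1.2.ne] using hx.2⟩)
          (fun x hx => hle x ⟨⟨hx.1.1, hx.1.2.trans hm.2⟩, by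
            simpa [hx.1.2.ne] using hx.2⟩)
      have hright : f b - f m ≤ ∫ x in m..b, g x :=
        ih hm.2.le (hf.mono (Icc_subset_Icc_left hm.1.le))
          (hg.mono_set (Icc_subset_Icc_left hm.1.le))
          (fun x hx => hf' x ⟨⟨hm.1.trans hx.1.1, hx.1.2⟩, by
            simpa [hx.1.1.ne'] using hx.2⟩)
          (fun x hx => hle x ⟨⟨hm.1.trans hx.1.1, hx.1.2⟩, by
            simpa [hx.1.1.ne'] using hx.2⟩)
      rw [← integral_add_adjacent_intervals
        ((intervalIntegrable_iff_integrableOn_Icc_of_le hm.1.le).2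
          (hg.mono_set (Icc_subset_Icc_right hm.2.le)))
        ((intervalIntegrable_iff_integrableOn_Icc_of_le hm.2.le).2
          (hg.mono_set (Icc_subset_Icc_left hm.1.le)))]
      linarith
    · have hsub : Ioo a b \ S ⊆ Ioo a b \ insert m S := fun x hx =>
        ⟨hx.1, by rintro (rfl | h); exacts [hm hx.1, hx.2 h]⟩
      exact ih hab hf hg (fun x hx => hf' x (hsub hx)) (fun x hx => hle x (hsub hx))

theorem antitoneOn_of_hasDerivAt_nonpos_off_finite {f f' : ℝ → ℝ} {S : Set ℝ} (hS : S.Finite)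
    {a b : ℝ} (hf : ContinuousOn f (Icc a b)) (hf' : ∀ x ∈ Ioo a b \ S, HasDerivAt f (f' x) x)
    (hle : ∀ x ∈ Ioo a b \ S, f' x ≤ 0) : AntitoneOn f (Icc a b) := by
  intro u hu v hv huv
  have hsub : Ioo u v \ S ⊆ Ioo a b \ S := sdiff_subset_sdiff_left (Ioo_subset_Ioo hu.1 hv.2)
  have := sub_le_integral_of_hasDerivAt_of_le_off_finite hS huv
    (hf.mono (Icc_subset_Icc hu.1 hv.2)) integrableOn_zero
    (fun x hx => hf' x (hsub hx)) (fun x hx => hle x (hsub hx))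
  rw [intervalIntegral.integral_zero] at this
  linarith

theorem integral_lt_one_of_deriv_le_neg_mul_delay {z z' B : ℝ → ℝ} {S : Set ℝ} (hS : S.Finite)
    {τ l p t : ℝ} (hl : 0 ≤ l) (hlτ : l ≤ τ) (hp : p + τ ≤ t - l)
    (hz : ContinuousOn z (Icc p t)) (hpos : ∀ s ∈ Icc (p - τ) t, 0 < z s)
    (hz' : ∀ s ∈ Ioo p t \ S, HasDerivAt z (z' s) s)
    (hdelay : ∀ s ∈ Ioo p t \ S, z' s ≤ -(B s * z (s - τ)))
    (hB : ∀ s ∈ Ioo p t, 0 ≤ B s) (hBint : IntegrableOn B (Icc (t - l) t)) :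
    ∫ s in (t - l)..t, B s < 1 := by
  have hanti : AntitoneOn z (Icc p t) :=
    antitoneOn_of_hasDerivAt_nonpos_off_finite hS hz hz' fun s hs =>
      (hdelay s hs).trans (neg_nonpos.2 (mul_nonneg (hB s hs.1)
        (hpos _ ⟨by linarith [hs.1.1], by linarith [hs.1.2]⟩).le))
  have hwin : Icc (t - l) t ⊆ Icc p t := Icc_subset_Icc_left (by linarith)
  have key := sub_le_integral_of_hasDerivAt_of_le_off_finite (g := fun s => -(B s * z (t - l)))
    hS (by linarith) (hz.mono hwin) (hBint.mul_const _).neg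
    (fun s hs => hz' s ⟨Ioo_subset_Ioo_left (by linarith) hs.1, hs.2⟩) fun s hs => by
      have hs' : s ∈ Ioo p t := Ioo_subset_Ioo_left (by linarith) hs.1
      refine (hdelay s ⟨hs', hs.2⟩).trans (neg_le_neg (mul_le_mul_of_nonneg_left ?_ (hB s hs')))
      exact hanti ⟨by linarith [hs.1.1], by linarith [hs.1.2]⟩ ⟨by linarith, by linarith⟩
        (by linarith [hs.1.2])
  rw [intervalIntegral.integral_neg, intervalIntegral.integral_mul_const] at key
  have hzt := hpos t ⟨by linarith, le_rfl⟩
  have hztl := hpos (t - l) ⟨by linarith, by linarith⟩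
  nlinarith

theorem hasDerivAt_exp_integral_s18 {a : ℝ → ℝ} (ha : Continuous a) (p s : ℝ) :
    HasDerivAt (fun v => Real.exp (∫ w in p..v, a w)) (Real.exp (∫ w in p..s, a w) * a s) s :=
  (integral_hasDerivAt_right (ha.intervalIntegrable _ _)
    ha.stronglyMeasurable.stronglyMeasurableAtFilter ha.continuousAt).exp

noncomputable def impulseFactor (t β : ℕ → ℝ) (p q : ℝ) : ℝ :=
  ∏ᶠ j ∈ {j | p < t j ∧ t j ≤ q}, (1 - β j)

section ImpulseTimes

variable {t β : ℕ → ℝ}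

theorem finite_setOf_le_of_tendsto_atTop (ht : Tendsto t atTop atTop) (q : ℝ) :
    {j | t j ≤ q}.Finite := by
  have : ∀ᶠ j in cofinite, q < t j := by
    rw [Nat.cofinite_eq_atTop]; exact ht.eventually (eventually_gt_atTop q)
  simpa using this

theorem finite_range_inter_Iic (ht : Tendsto t atTop atTop) (q : ℝ) :
    (range t ∩ Iic q).Finite :=
  ((finite_setOf_le_of_tendsto_atTop ht q).image t).subset <| by
    rintro _ ⟨⟨j, rfl⟩, h⟩
    exact ⟨j, h, rfl⟩

theorem exists_pos_le_abs_sub_of_ne (ht : Tendsto t atTop atTop) (u : ℝ) :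
    ∃ ε > 0, ∀ j, t j ≠ u → ε ≤ |t j - u| := by
  have hK : (t '' {j | t j ≤ u + 1 ∧ t j ≠ u}).Finite :=
    ((finite_setOf_le_of_tendsto_atTop ht (u + 1)).subset fun j hj => hj.1).image t
  obtain ⟨δ, hδ, hball⟩ := Metric.mem_nhds_iff.1 (hK.isClosed.compl_mem_nhds
    fun ⟨j, hj, hju⟩ => hj.2 hju)
  refine ⟨min δ 1, lt_min hδ one_pos, fun j hj => ?_⟩
  by_cases hj1 : t j ≤ u + 1
  · have : t j ∉ Metric.ball u δ := fun h => hball h ⟨j, ⟨hj1, hj⟩, rfl⟩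
    rw [Metric.mem_ball, Real.dist_eq, not_lt] at this
    exact (min_le_left _ _).trans this
  · exact (min_le_right _ _).trans (by rw [abs_of_pos (by linarith)]; linarith)

theorem impulseFactor_pos (ht : Tendsto t atTop atTop) (hβ : ∀ j, β j < 1) (p q : ℝ) :
    0 < impulseFactor t β p q := by
  rw [impulseFactor, finprod_mem_eq_finite_toFinset_prod _
    ((finite_setOf_le_of_tendsto_atTop ht q).subset fun j hj => hj.2)]
  exact Finset.prod_pos fun j _ => sub_pos.2 (hβ j)

theorem impulseFactor_mul (ht : Tendsto t atTop atTop) {p q r : ℝ} (hpq : p ≤ q) (hqr : q ≤ r) :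
    impulseFactor t β p q * impulseFactor t β q r = impulseFactor t β p r := by
  have hfin : ∀ p q, {j | p < t j ∧ t j ≤ q}.Finite := fun p q =>
    (finite_setOf_le_of_tendsto_atTop ht q).subset fun j hj => hj.2
  have hunion : {j | p < t j ∧ t j ≤ q} ∪ {j | q < t j ∧ t j ≤ r} = {j | p < t j ∧ t j ≤ r} := by
    ext j
    simp only [mem_union]
    constructor
    · rintro (h | h)
      exacts [⟨h.1, h.2.trans hqr⟩, ⟨hpq.trans_lt h.1, h.2⟩]
    · intro h
      exact (le_or_gt (t j) q).imp (fun h' => ⟨h.1, h'⟩) fun h' => ⟨h', h.2⟩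
  rw [impulseFactor, impulseFactor, impulseFactor, ← hunion,
    finprod_mem_union (disjoint_left.2 fun j h h' => h'.1.not_ge h.2) (hfin p q) (hfin q r)]

theorem eventually_impulseFactor_nhdsGE (ht : Tendsto t atTop atTop) (u : ℝ) :
    ∀ᶠ v in 𝓝[≥] u, impulseFactor t β u v = 1 := by
  obtain ⟨ε, hε, hsep⟩ := exists_pos_le_abs_sub_of_ne ht u
  filter_upwards [Ico_mem_nhdsGE (by linarith : u < u + ε)] with v hv
  refine finprod_mem_of_eqOn_one fun j hj => ?_
  have := hsep j hj.1.ne'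
  rw [abs_of_pos (sub_pos.2 hj.1)] at this
  linarith [hj.2, hv.2]

theorem eventually_impulseFactor_nhdsLT (ht : Tendsto t atTop atTop) (u : ℝ) :
    ∀ᶠ v in 𝓝[<] u, impulseFactor t β v u = ∏ᶠ j ∈ t ⁻¹' {u}, (1 - β j) := by
  obtain ⟨ε, hε, hsep⟩ := exists_pos_le_abs_sub_of_ne ht u
  filter_upwards [Ioo_mem_nhdsLT (by linarith : u - ε < u)] with v hv
  refine finprod_mem_congr (ext fun j => ⟨fun hj => by_contra fun hne => ?_,
    fun hj => ⟨(mem_singleton_iff.1 hj) ▸ hv.2, (mem_singleton_iff.1 hj).le⟩⟩) fun _ _ => rfl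
  have := hsep j hne
  rw [abs_of_neg (sub_neg.2 (lt_of_le_of_ne hj.2 hne))] at this
  linarith [hj.1, hv.1]

theorem eventually_impulseFactor_eq_of_notMem_range (ht : Tendsto t atTop atTop) {p u : ℝ}
    (hpu : p < u) (hu : u ∉ range t) :
    ∀ᶠ v in 𝓝 u, impulseFactor t β p v = impulseFactor t β p u := by
  rw [← nhdsLT_sup_nhdsGE, eventually_sup]
  constructor
  · filter_upwards [eventually_impulseFactor_nhdsLT ht u, Ioo_mem_nhdsLT hpu] with v hv hpv
    have hempty : t ⁻¹' {u} = ∅ := eq_empty_of_forall_notMem fun j hj => hu ⟨j, hj⟩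
    rw [← impulseFactor_mul ht hpv.1.le hpv.2.le, hv, hempty, finprod_mem_empty, mul_one]
  · filter_upwards [eventually_impulseFactor_nhdsGE ht u, self_mem_nhdsWithin] with v hv huv
    rw [← impulseFactor_mul ht hpu.le huv, hv, mul_one]

end ImpulseTimes

section ImpulsiveSolutions

variable {t β : ℕ → ℝ}

theorem continuousAt_mul_impulseFactor (ht : Tendsto t atTop atTop) (hinj : Function.Injective t)
    (hβ : ∀ i, β i ≠ 1) {x : ℝ → ℝ} {p u : ℝ} (hpu : p < u) (hx : u ∉ range t → ContinuousAt x u)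
    (hrc : ∀ i, ContinuousWithinAt x (Ici (t i)) (t i))
    (hlim : ∀ i, Tendsto x (𝓝[<] (t i)) (𝓝 ((1 - β i) * x (t i)))) :
    ContinuousAt (fun v => x v * impulseFactor t β p v) u := by
  by_cases hu : u ∈ range t
  · obtain ⟨i, rfl⟩ := hu
    have hβi : 1 - β i ≠ 0 := sub_ne_zero.2 (hβ i).symm
    have hjump : ∏ᶠ j ∈ t ⁻¹' {t i}, (1 - β j) = 1 - β i := by
      rw [show t ⁻¹' {t i} = {i} from ext fun j => hinj.eq_iff, finprod_mem_singleton]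
    rw [← continuousWithinAt_univ, ← Iio_union_Ici]
    refine ContinuousWithinAt.union ?_ ?_
    · have hQ : ∀ᶠ v in 𝓝[<] t i,
          impulseFactor t β p v = impulseFactor t β p (t i) / (1 - β i) := by
        filter_upwards [eventually_impulseFactor_nhdsLT ht (t i), Ioo_mem_nhdsLT hpu]
          with v hv hpv
        rw [eq_div_iff hβi, ← hjump, ← hv, impulseFactor_mul ht hpv.1.le hpv.2.le]
      have hleft := (hlim i).mul_const (impulseFactor t β p (t i) / (1 - β i))
      rw [show (1 - β i) * x (t i) * (impulseFactor t β p (t i) / (1 - β i))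
          = x (t i) * impulseFactor t β p (t i) by field_simp] at hleft
      exact hleft.congr' (hQ.mono fun v hv => (congrArg (x v * ·) hv).symm)
    · refine ((hrc i).fun_mul continuousWithinAt_const).congr_of_eventuallyEq ?_ rfl
      filter_upwards [eventually_impulseFactor_nhdsGE ht (t i), self_mem_nhdsWithin]
        with v hv hv'
      rw [← impulseFactor_mul ht hpu.le hv', hv, mul_one]
  · refine ((hx hu).fun_mul (continuousAt_const (y := impulseFactor t β p u))).congr ?_
    filter_upwards [eventually_impulseFactor_eq_of_notMem_range ht hpu hu] with v hv
    rw [hv]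

theorem hasDerivAt_mul_impulseFactor_mul_exp (ht : Tendsto t atTop atTop) {a x : ℝ → ℝ}
    (ha : Continuous a) {x' p s : ℝ} (hps : p < s) (hs : s ∉ range t) (hx : HasDerivAt x x' s) :
    HasDerivAt (fun v => x v * impulseFactor t β p v * Real.exp (∫ w in p..v, a w))
      ((x' + a s * x s) * impulseFactor t β p s * Real.exp (∫ w in p..s, a w)) s := by
  have hxQ : HasDerivAt (fun v => x v * impulseFactor t β p v) (x' * impulseFactor t β p s) s := by
    refine (hx.mul_const _).congr_of_eventuallyEq ?_
    filter_upwards [eventually_impulseFactor_eq_of_notMem_range ht hps hs] with v hv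
    rw [hv]
  exact (hxQ.fun_mul (hasDerivAt_exp_integral_s18 ha p s)).congr_deriv (by ring)

theorem integrableOn_impulseFactor_sub_mul (ht : Tendsto t atTop atTop) {g : ℝ → ℝ}
    (hg : Continuous g) (τ p q : ℝ) :
    IntegrableOn (fun s => impulseFactor t β (s - τ) s * g s) (Icc p q) := by
  classical
  -- on `Icc p q` only the finitely many `j` with `t j ≤ q` can contribute
  set F := (finite_setOf_le_of_tendsto_atTop ht q).toFinset
  set P : ℝ → ℝ := fun s => ∏ j ∈ F, if s - τ < t j ∧ t j ≤ s then 1 - β j else 1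
  have hP : EqOn P (fun s => impulseFactor t β (s - τ) s) (Icc p q) := fun s hs => by
    simp only [P, impulseFactor, ← Finset.prod_filter]
    refine (finprod_mem_eq_prod_of_subset _ (fun j hj => ?_) fun j hj => ?_).symm
    · simpa [F] using ⟨hj.1.2.trans hs.2, hj.1⟩
    · exact (Finset.mem_filter.1 hj).2
  have hPmeas : Measurable P := Finset.measurable_prod _ fun j _ =>
    Measurable.ite ((measurableSet_lt (measurable_id.sub_const τ) measurable_const).inter
      (measurableSet_le measurable_const measurable_id)) measurable_const measurable_const
  have hPbound : ∀ s, ‖P s‖ ≤ ∏ j ∈ F, max |1 - β j| 1 := fun s => by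
    rw [Real.norm_eq_abs, Finset.abs_prod]
    refine Finset.prod_le_prod (fun _ _ => abs_nonneg _) fun j _ => ?_
    split_ifs <;> simp
  exact IntegrableOn.congr_fun (hg.integrableOn_Icc.bdd_mul hPmeas.aestronglyMeasurable
    (Eventually.of_forall hPbound)) (fun s hs => by rw [hP hs]) measurableSet_Icc

theorem impulseFactor_mul_exp_integral_adjacent (ht : Tendsto t atTop atTop)
    {a : ℝ → ℝ} (ha : Continuous a) {p q r : ℝ} (hpq : p ≤ q) (hqr : q ≤ r) :
    impulseFactor t β p q * Real.exp (∫ u in p..q, a u) *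
        (impulseFactor t β q r * Real.exp (∫ u in q..r, a u)) =
      impulseFactor t β p r * Real.exp (∫ u in p..r, a u) := by
  rw [← impulseFactor_mul ht hpq hqr, ← integral_add_adjacent_intervals
    (ha.intervalIntegrable p q) (ha.intervalIntegrable q r), Real.exp_add]
  ring

theorem integrableOn_impulseFactor_mul_mul_exp (ht : Tendsto t atTop atTop)
    {a b : ℝ → ℝ} (ha : Continuous a) (hb : Continuous b) (τ p q : ℝ) :
    IntegrableOn (fun s => impulseFactor t β (s - τ) s * b s *
      Real.exp (∫ u in (s - τ)..s, a u)) (Icc p q) := by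
  have hprim := continuous_primitive (μ := volume) (fun _ _ => ha.intervalIntegrable _ _) 0
  have hexp : Continuous fun s => Real.exp (∫ u in (s - τ)..s, a u) :=
    Real.continuous_exp.comp ((hprim.sub (hprim.comp (continuous_sub_right τ))).congr fun s =>
      integral_interval_sub_left (ha.intervalIntegrable _ _) (ha.intervalIntegrable _ _))
  exact (integrableOn_impulseFactor_sub_mul ht (hb.fun_mul hexp) τ p q).congr_fun
    (fun s _ => (mul_assoc _ _ _).symm) measurableSet_Icc

end ImpulsiveSolutions

theorem integral_window_lt_one_of_eventually_pos (a b c : ℝ → ℝ) (ha : Continuous a)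
    (hb : Continuous b) (hbnn : ∀ t, 0 ≤ b t) (hcnn : ∀ t, 0 ≤ c t) (τ : ℝ) (hτ : 0 < τ)
    (bi : ℕ → ℝ) (hbi : ∀ i, bi i < 1) (ti : ℕ → ℝ) (hti : Function.Injective ti)
    (htiTop : Tendsto ti atTop atTop) (x : ℝ → ℝ)
    (hsol : ∀ t, 0 < t → (∀ i, t ≠ ti i) →
      HasDerivAt x (-(a t * x t + b t * x (t - τ) + c t * x ((⌊t - 1⌋ : ℤ) : ℝ))) t)
    (hrc : ∀ i, ContinuousWithinAt x (Ici (ti i)) (ti i))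
    (himp : ∀ i, Tendsto x (𝓝[<] (ti i)) (𝓝 ((1 - bi i) * x (ti i))))
    {T : ℝ} (hT0 : 0 ≤ T) (hT : ∀ t, T < t → 0 < x t) {l t : ℝ} (hl : 0 ≤ l) (hlτ : l ≤ τ)
    (htT : T + 2 + l + 2 * τ < t) :
    ∫ s in (t - l)..t, impulseFactor ti bi (s - τ) s * b s * Real.exp (∫ u in (s - τ)..s, a u)
      < 1 := by
  set p := t - l - τ
  set Q := impulseFactor ti bi (p - τ)
  set E : ℝ → ℝ := fun s => Real.exp (∫ u in (p - τ)..s, a u)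
  set F : ℝ → ℝ := fun s => b s * x (s - τ) + c s * x ((⌊s - 1⌋ : ℤ) : ℝ)
  have hsol' : ∀ s, p - τ < s → s ∉ range ti → HasDerivAt x (-(a s * x s + F s)) s :=
    fun s hs hs' => by
      simpa only [F, add_assoc] using hsol s (by linarith) fun i h => hs' ⟨i, h.symm⟩
  have hz' : ∀ s ∈ Ioo p t \ (range ti ∩ Iic t),
      HasDerivAt (fun v => x v * Q v * E v) (-F s * Q s * E s) s := fun s hs => by
    have hs' : s ∉ range ti := fun h => hs.2 ⟨h, hs.1.2.le⟩
    exact (hasDerivAt_mul_impulseFactor_mul_exp htiTop ha (by linarith [hs.1.1]) hs'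
      (hsol' s (by linarith [hs.1.1]) hs')).congr_deriv (by ring)
  have hz : ContinuousOn (fun v => x v * Q v * E v) (Icc p t) := fun u hu =>
    ((continuousAt_mul_impulseFactor htiTop hti (fun i => (hbi i).ne) (by linarith [hu.1])
      (fun hu' => (hsol' u (by linarith [hu.1]) hu').continuousAt) hrc himp).fun_mul
      (hasDerivAt_exp_integral_s18 ha _ u).continuousAt).continuousWithinAt
  have hpos : ∀ s ∈ Icc (p - τ) t, 0 < x s * Q s * E s := fun s hs =>
    mul_pos (mul_pos (hT s (by linarith [hs.1])) (impulseFactor_pos htiTop hbi _ _))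
      (Real.exp_pos _)
  -- `Q s * E s` factors through `s - τ`, which makes the `b`-term exactly `B s * z (s - τ)`
  have hdelay : ∀ s ∈ Ioo p t \ (range ti ∩ Iic t),
      -F s * Q s * E s ≤ -(impulseFactor ti bi (s - τ) s * b s *
        Real.exp (∫ u in (s - τ)..s, a u) * (x (s - τ) * Q (s - τ) * E (s - τ))) :=
    fun s hs => by
      have hW := impulseFactor_mul_exp_integral_adjacent (β := bi) htiTop ha
        (by linarith [hs.1.1] : p - τ ≤ s - τ) (by linarith : s - τ ≤ s)
      have hc : 0 ≤ c s * x ((⌊s - 1⌋ : ℤ) : ℝ) * (Q s * E s) :=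
        mul_nonneg (mul_nonneg (hcnn s)
          (hT _ (by linarith [hs.1.1, Int.sub_one_lt_floor (s - 1)])).le)
          (mul_pos (impulseFactor_pos htiTop hbi _ _) (Real.exp_pos _)).le
      simp only [F]
      linear_combination hc + b s * x (s - τ) * hW
  exact integral_lt_one_of_deriv_le_neg_mul_delay (finite_range_inter_Iic htiTop t) hl hlτ
    (sub_add_cancel (t - l) τ).le hz hpos hz' hdelay
    (fun s _ => mul_nonneg (mul_nonneg (impulseFactor_pos htiTop hbi _ _).le (hbnn s))
      (Real.exp_pos _).le)
    (integrableOn_impulseFactor_mul_mul_exp htiTop ha hb τ _ _)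

theorem not_eventually_pos_of_one_lt_limsup (a b c : ℝ → ℝ) (ha : Continuous a)
    (hb : Continuous b) (hbnn : ∀ t, 0 ≤ b t) (hcnn : ∀ t, 0 ≤ c t) (τ : ℝ) (hτ : 0 < τ)
    (bi : ℕ → ℝ) (hbi : ∀ i, bi i < 1) (ti : ℕ → ℝ) (hti : Function.Injective ti)
    (htiTop : Tendsto ti atTop atTop)
    (hcrit : 1 < limsup (fun t => ∫ s in (t - min τ 1)..t,
      impulseFactor ti bi (s - τ) s * b s * Real.exp (∫ u in (s - τ)..s, a u)) atTop)
    (x : ℝ → ℝ)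
    (hsol : ∀ t, 0 < t → (∀ i, t ≠ ti i) →
      HasDerivAt x (-(a t * x t + b t * x (t - τ) + c t * x ((⌊t - 1⌋ : ℤ) : ℝ))) t)
    (hrc : ∀ i, ContinuousWithinAt x (Ici (ti i)) (ti i))
    (himp : ∀ i, Tendsto x (𝓝[<] (ti i)) (𝓝 ((1 - bi i) * x (ti i)))) :
    ¬ ∃ T, ∀ t, T < t → 0 < x t := by
  rintro ⟨T, hT⟩
  have hl : 0 ≤ min τ 1 := le_min hτ.le zero_le_one
  have hnonneg : ∀ t, 0 ≤ ∫ s in (t - min τ 1)..t,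
      impulseFactor ti bi (s - τ) s * b s * Real.exp (∫ u in (s - τ)..s, a u) := fun t =>
    integral_nonneg (by linarith) fun s _ => mul_nonneg
      (mul_nonneg (impulseFactor_pos htiTop hbi _ _).le (hbnn s)) (Real.exp_pos _).le
  obtain ⟨t, hcrit_t, ht⟩ := ((frequently_lt_of_lt_limsup
    (isCoboundedUnder_le_of_le atTop hnonneg) hcrit).and_eventually
      (eventually_gt_atTop (max T 0 + 2 + min τ 1 + 2 * τ))).exists
  refine (integral_window_lt_one_of_eventually_pos a b c ha hb hbnn hcnn τ hτ bi hbi ti hti htiTop x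
    hsol hrc himp (le_max_right T 0) (fun s hs => hT s ((le_max_left T 0).trans_lt hs)) hl
    (min_le_left τ 1) ht).not_gt hcrit_t

theorem oscillation_limsup_criterion_general
    (a b c : ℝ → ℝ) (ha : Continuous a) (hb : Continuous b)
    (hbnn : ∀ t, 0 ≤ b t) (hcnn : ∀ t, 0 ≤ c t)
    (τ : ℝ) (hτ : 0 < τ)
    (bi : ℕ → ℝ) (hbi : ∀ i, bi i < 1)
    (ti : ℕ → ℝ) (hti : StrictMono ti)
    (htiTop : Tendsto ti atTop atTop)
    (hcrit : 1 < Filter.limsup (fun t => ∫ s in (t - min τ 1)..t,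
      (∏ᶠ j ∈ {j : ℕ | s - τ < ti j ∧ ti j ≤ s}, (1 - bi j)) * b s *
        Real.exp (∫ u in (s - τ)..s, a u)) Filter.atTop)
    (x : ℝ → ℝ)
    (hsol : ∀ t, 0 < t → (∀ i, t ≠ ti i) →
      HasDerivAt x (-(a t * x t + b t * x (t - τ) + c t * x ((⌊t - 1⌋ : ℤ) : ℝ))) t)
    (hrc : ∀ i, ContinuousWithinAt x (Set.Ici (ti i)) (ti i))
    (himp : ∀ i, Tendsto x (nhdsWithin (ti i) (Set.Iio (ti i)))
      (nhds ((1 - bi i) * x (ti i)))) :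
    (¬ ∃ T, ∀ t, T < t → 0 < x t) ∧ (¬ ∃ T, ∀ t, T < t → x t < 0) := by
  refine ⟨not_eventually_pos_of_one_lt_limsup a b c ha hb hbnn hcnn τ hτ bi hbi ti hti.injective
    htiTop hcrit x hsol hrc himp, fun ⟨T, hT⟩ => ?_⟩
  refine not_eventually_pos_of_one_lt_limsup a b c ha hb hbnn hcnn τ hτ bi hbi ti hti.injective
    htiTop hcrit (fun t => -x t) (fun t ht ht' => ?_) (fun i => (hrc i).neg) (fun i => ?_)
    ⟨T, fun t ht => neg_pos.2 (hT t ht)⟩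
  · exact (hsol t ht ht').neg.congr_deriv (by ring)
  · simpa only [mul_neg] using (himp i).neg

/-- Theorem 2 (first condition): with `l = min{τ,1}`, if
`limsup_{t→∞} ∫_{t-l}^{t} (∏_{s-τ < t_j ≤ s}(1-b_j)) b(s) exp(∫_{s-τ}^{s} a) ds > 1`,
then every solution of `x'(t) + a(t)x(t) + b(t)x(t-τ) + c(t)x(⌊t-1⌋) = 0` (`t ≠ t_i`),
`Δx(t_i) = b_i x(t_i)`, is oscillatory. -/
theorem oscillation_limsup_criterion
    (a b c : ℝ → ℝ) (ha : Continuous a) (hb : Continuous b) (hc : Continuous c)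
    (hbnn : ∀ t, 0 ≤ b t) (hcnn : ∀ t, 0 ≤ c t)
    (τ : ℝ) (hτ : 0 < τ)
    (bi : ℕ → ℝ) (hbi : ∀ i, bi i < 1)
    (ti : ℕ → ℝ) (hti : StrictMono ti) (hti0 : 0 < ti 0)
    (htiTop : Tendsto ti atTop atTop)
    (hcrit : 1 < Filter.limsup (fun t => ∫ s in (t - min τ 1)..t,
      (∏ᶠ j ∈ {j : ℕ | s - τ < ti j ∧ ti j ≤ s}, (1 - bi j)) * b s *
        Real.exp (∫ u in (s - τ)..s, a u)) Filter.atTop)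
    (x : ℝ → ℝ)
    (hsol : ∀ t, 0 < t → (∀ i, t ≠ ti i) →
      HasDerivAt x (-(a t * x t + b t * x (t - τ) + c t * x ((⌊t - 1⌋ : ℤ) : ℝ))) t)
    (hrc : ∀ i, ContinuousWithinAt x (Set.Ici (ti i)) (ti i))
    (himp : ∀ i, Tendsto x (nhdsWithin (ti i) (Set.Iio (ti i)))
      (nhds ((1 - bi i) * x (ti i)))) :
    (¬ ∃ T, ∀ t, T < t → 0 < x t) ∧ (¬ ∃ T, ∀ t, T < t → x t < 0) :=
  oscillation_limsup_criterion_general a b c ha hb hbnn hcnn τ hτ bi hbi ti hti htiTop hcrit x hsol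
    hrc himp
end
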